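/- arXiv:2507.04427 — 3 statements merged into one kernel-verified Lean document; each statement's English description precedes it below -/
import Mathlib

section
/- Let θ ≥ 1 and a ≥ 0, and write θ̄ := 1/θ. Then for every n ≥ 0 one has p_n^a(θ) = (1+a)^{-(n+1)} · ∑_{k=0}^{n+1} φ_{n+1-k}(θ̄) · (−a)^{n+1-k} · (θ̄^{k(k-1)/2}/k!). -/
open MeasureTheory Set

/-- Persistence probability `p_n^a(θ)` for the MA(1) process with uniform
innovations on `[-a,1]`. -/
noncomputable def persprob (a θ : ℝ) : ℕ → ℝ
  | 0 => 1
  | n + 1 =>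
    (volume {x : Fin (n + 2) → ℝ |
        (∀ i, x i ∈ Icc (-a) 1) ∧
        ∀ i : Fin (n + 1), θ * x i.castSucc ≤ x i.succ}).toReal / (1 + a) ^ (n + 2)

/-- `φ_ℓ(θ)`: the sum over all `ℓ`-profiles `r = (r_1,…,r_ℓ)` (nonnegative
integers with `∑ i·r_i = ℓ`, so that necessarily `r_i ≤ ℓ`) of
`((∑ r_i)! / (r_1!⋯r_ℓ!)) · ∏_i (−θ^{i(i−1)/2}/i!)^{r_i}`, with `φ_0(θ) := 1`.
Here `i : Fin ℓ` encodes the index `i+1 ∈ {1,…,ℓ}`. -/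
noncomputable def phiR (θ : ℝ) : ℕ → ℝ
  | 0 => 1
  | ℓ + 1 =>
    ∑ r ∈ Finset.univ.filter
        (fun r : Fin (ℓ + 1) → Fin (ℓ + 2) =>
          ∑ i : Fin (ℓ + 1), (i.1 + 1) * (r i).1 = ℓ + 1),
      (((∑ i : Fin (ℓ + 1), (r i).1).factorial : ℝ) /
          ∏ i : Fin (ℓ + 1), ((r i).1.factorial : ℝ)) *
        ∏ i : Fin (ℓ + 1),
          (-(θ ^ ((i.1 + 1) * i.1 / 2)) / (((i.1 + 1).factorial : ℕ) : ℝ)) ^ (r i).1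


namespace CRaux
open Finset


noncomputable def cc (θ : ℝ) (m : ℕ) : ℝ := -(θ ^ (m * (m - 1) / 2)) / (m.factorial : ℝ)

def wsum {L B : ℕ} (r : Fin L → Fin B) : ℕ := ∑ i, (i.1 + 1) * (r i).1

noncomputable def term (θ : ℝ) {L B : ℕ} (r : Fin L → Fin B) : ℝ :=
  (((∑ i, (r i).1).factorial : ℝ) / ∏ i, (((r i).1).factorial : ℝ)) *
    ∏ i, (cc θ (i.1 + 1)) ^ (r i).1

noncomputable def Q (θ : ℝ) (L B s : ℕ) : ℝ :=
  ∑ r ∈ Finset.univ.filter (fun r : Fin L → Fin B => wsum r = s), term θ r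

lemma wsum_le {L B s : ℕ} {r : Fin L → Fin B} (h : wsum r = s) (i : Fin L) :
    (i.1 + 1) * (r i).1 ≤ s := by
  subst h
  exact Finset.single_le_sum (f := fun j : Fin L => (j.1 + 1) * (r j).1)
    (fun j _ => Nat.zero_le _) (Finset.mem_univ i)

lemma term_zero (θ : ℝ) {L B : ℕ} (r : Fin L → Fin B) (h : ∀ i, (r i).1 = 0) :
    term θ r = 1 := by
  simp [term, h]

lemma Q_zero (θ : ℝ) (L B : ℕ) (hB : 0 < B) : Q θ L B 0 = 1 := by
  rw [Q]
  rw [Finset.sum_eq_single (fun _ : Fin L => (⟨0, hB⟩ : Fin B))]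
  · exact term_zero θ _ (fun i => rfl)
  · intro r hr hne
    exfalso
    apply hne
    simp only [Finset.mem_filter, Finset.mem_univ, true_and] at hr
    funext i
    have h1 := wsum_le hr i
    have h0 : (r i).1 = 0 := by
      rcases Nat.mul_eq_zero.mp (Nat.le_zero.mp h1) with h | h
      · omega
      · exact h
    simp [Fin.ext_iff, h0]
  · intro h
    exfalso
    apply h
    simp only [Finset.mem_filter, Finset.mem_univ, true_and]
    simp [wsum]



def toNat {L B : ℕ} (r : Fin L → Fin B) : ℕ → ℕ :=
  fun m => if h : m < L then (r ⟨m, h⟩).1 else 0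

lemma toNat_val {L B : ℕ} (r : Fin L → Fin B) (i : Fin L) : toNat r i.1 = (r i).1 := by
  simp [toNat, i.2]

lemma wsum_eq_range {L B : ℕ} (r : Fin L → Fin B) :
    wsum r = ∑ m ∈ range L, (m + 1) * toNat r m := by
  rw [wsum, ← Fin.sum_univ_eq_sum_range (fun m => (m + 1) * toNat r m) L]
  exact Finset.sum_congr rfl (fun i _ => by rw [toNat_val])

lemma sumv_eq_range {L B : ℕ} (r : Fin L → Fin B) :
    (∑ i, (r i).1) = ∑ m ∈ range L, toNat r m := by
  rw [← Fin.sum_univ_eq_sum_range (fun m => toNat r m) L]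
  exact Finset.sum_congr rfl (fun i _ => by rw [toNat_val])

lemma prodfact_eq_range {L B : ℕ} (r : Fin L → Fin B) :
    (∏ i, (((r i).1).factorial : ℝ)) = ∏ m ∈ range L, ((toNat r m).factorial : ℝ) := by
  rw [← Fin.prod_univ_eq_prod_range (fun m => ((toNat r m).factorial : ℝ)) L]
  exact Finset.prod_congr rfl (fun i _ => by rw [toNat_val])

lemma prodc_eq_range (θ : ℝ) {L B : ℕ} (r : Fin L → Fin B) :
    (∏ i, (cc θ (i.1 + 1)) ^ (r i).1) = ∏ m ∈ range L, (cc θ (m + 1)) ^ toNat r m := by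
  rw [← Fin.prod_univ_eq_prod_range (fun m => (cc θ (m + 1)) ^ toNat r m) L]
  exact Finset.prod_congr rfl (fun i _ => by rw [toNat_val])

lemma wsum_term_congr (θ : ℝ) {L B L' B' : ℕ} (r : Fin L → Fin B) (r' : Fin L' → Fin B')
    (t : ℕ) (hL : t ≤ L) (hL' : t ≤ L')
    (h0 : ∀ m, t ≤ m → toNat r m = 0) (h0' : ∀ m, t ≤ m → toNat r' m = 0)
    (he : ∀ m, m < t → toNat r m = toNat r' m) :
    wsum r = wsum r' ∧ term θ r = term θ r' := by
  have hsum : ∀ (f : ℕ → ℕ → ℕ), (∀ m, f m 0 = 0) →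
      (∑ m ∈ range L, f m (toNat r m)) = ∑ m ∈ range L', f m (toNat r' m) := by
    intro f hf
    rw [← Finset.sum_subset (Finset.range_subset_range.2 hL)
      (fun x _ hx => by rw [h0 x (by simpa using hx)]; exact hf x)]
    rw [← Finset.sum_subset (Finset.range_subset_range.2 hL')
      (fun x _ hx => by rw [h0' x (by simpa using hx)]; exact hf x)]
    exact Finset.sum_congr rfl (fun m hm => by rw [he m (by simpa using hm)])
  have hprod : ∀ (f : ℕ → ℕ → ℝ), (∀ m, f m 0 = 1) →
      (∏ m ∈ range L, f m (toNat r m)) = ∏ m ∈ range L', f m (toNat r' m) := by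
    intro f hf
    rw [← Finset.prod_subset (Finset.range_subset_range.2 hL)
      (fun x _ hx => by rw [h0 x (by simpa using hx)]; exact hf x)]
    rw [← Finset.prod_subset (Finset.range_subset_range.2 hL')
      (fun x _ hx => by rw [h0' x (by simpa using hx)]; exact hf x)]
    exact Finset.prod_congr rfl (fun m hm => by rw [he m (by simpa using hm)])
  constructor
  · rw [wsum_eq_range, wsum_eq_range]
    exact hsum (fun m v => (m + 1) * v) (fun m => by simp)
  · rw [term, term, sumv_eq_range, sumv_eq_range, prodfact_eq_range, prodfact_eq_range,
      prodc_eq_range, prodc_eq_range]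
    rw [hsum (fun _ v => v) (fun m => rfl), hprod (fun m v => ((v.factorial : ℕ) : ℝ)) (fun m => by simp),
      hprod (fun m v => (cc θ (m + 1)) ^ v) (fun m => by simp)]



lemma val_le_of_wsum {L B s : ℕ} {r : Fin L → Fin B} (h : wsum r = s) (i : Fin L) :
    (r i).1 ≤ s := by
  have := wsum_le h i
  calc (r i).1 ≤ (i.1 + 1) * (r i).1 := Nat.le_mul_of_pos_left _ (Nat.succ_pos _)
    _ ≤ s := this

lemma val_eq_zero_of_wsum {L B s : ℕ} {r : Fin L → Fin B} (h : wsum r = s) (i : Fin L)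
    (hi : s ≤ i.1) : (r i).1 = 0 := by
  have h1 := wsum_le h i
  by_contra hne
  have : i.1 + 1 ≤ (i.1 + 1) * (r i).1 := Nat.le_mul_of_pos_right _ (Nat.pos_of_ne_zero hne)
  omega

lemma Q_pad (θ : ℝ) (t L B : ℕ) (hL : t + 1 ≤ L) (hB : t + 2 ≤ B) :
    Q θ L B (t + 1) = Q θ (t + 1) (t + 2) (t + 1) := by
  rw [Q, Q]
  refine Finset.sum_nbij'
    (fun r : Fin L → Fin B => fun i : Fin (t + 1) =>
      (⟨min ((r ⟨i.1, lt_of_lt_of_le i.2 hL⟩).1) (t + 1), by omega⟩ : Fin (t + 2)))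
    (fun r' : Fin (t + 1) → Fin (t + 2) => fun i : Fin L =>
      if h : i.1 < t + 1 then (⟨(r' ⟨i.1, h⟩).1, lt_of_lt_of_le (r' ⟨i.1, h⟩).2 hB⟩ : Fin B)
      else ⟨0, by omega⟩)
    ?_ ?_ ?_ ?_ ?_
  · -- maps into filter
    intro r hr
    simp only [Finset.mem_filter, Finset.mem_univ, true_and] at hr ⊢
    refine ((wsum_term_congr θ r _ (t + 1) hL le_rfl ?_ ?_ ?_).1).symm.trans hr
    · intro m hm
      simp only [toNat]
      split
      · exact val_eq_zero_of_wsum hr _ hm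
      · rfl
    · intro m hm; simp only [toNat, dif_neg (show ¬ m < t + 1 by omega)]
    · intro m hm
      simp only [toNat, dif_pos (lt_of_lt_of_le hm hL), dif_pos hm]
      exact (Nat.min_eq_left (val_le_of_wsum hr _)).symm
  · intro r' hr'
    simp only [Finset.mem_filter, Finset.mem_univ, true_and] at hr' ⊢
    refine ((wsum_term_congr θ _ r' (t + 1) hL le_rfl ?_ ?_ ?_).1).trans hr'
    · intro m hm
      simp only [toNat]
      split
      · simp [Nat.not_lt.2 hm]
      · rfl
    · intro m hm; simp only [toNat, dif_neg (show ¬ m < t + 1 by omega)]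
    · intro m hm
      simp [toNat, hm, lt_of_lt_of_le hm hL]
  · -- left inverse
    intro r hr
    simp only [Finset.mem_filter, Finset.mem_univ, true_and] at hr
    funext i
    by_cases h : i.1 < t + 1
    · simp only [dif_pos h]
      ext
      simp only []
      rw [Nat.min_eq_left (val_le_of_wsum hr _)]
    · simp only [dif_neg h]
      ext
      simp only []
      exact (val_eq_zero_of_wsum hr i (by omega)).symm
  · intro r' hr'
    simp only [Finset.mem_filter, Finset.mem_univ, true_and] at hr'
    funext i
    simp only [dif_pos i.2]
    ext
    simp only []
    exact Nat.min_eq_left (val_le_of_wsum hr' _)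
  · intro r hr
    simp only [Finset.mem_filter, Finset.mem_univ, true_and] at hr
    refine (wsum_term_congr θ r _ (t + 1) hL le_rfl ?_ ?_ ?_).2
    · intro m hm
      simp only [toNat]
      split
      · exact val_eq_zero_of_wsum hr _ hm
      · rfl
    · intro m hm; simp only [toNat, dif_neg (show ¬ m < t + 1 by omega)]
    · intro m hm
      simp only [toNat, dif_pos (lt_of_lt_of_le hm hL), dif_pos hm]
      exact (Nat.min_eq_left (val_le_of_wsum hr _)).symm



noncomputable def psi (θ : ℝ) {L B : ℕ} (i : Fin L) (r : Fin L → Fin B) : ℝ :=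
  ((r i).1 : ℝ) / (∑ j, ((r j).1 : ℝ)) * term θ r

lemma psi_zero (θ : ℝ) {L B : ℕ} (i : Fin L) (r : Fin L → Fin B) (h : (r i).1 = 0) :
    psi θ i r = 0 := by simp [psi, h]

lemma sum_psi (θ : ℝ) {L B s : ℕ} (hs : 1 ≤ s) (r : Fin L → Fin B) (hr : wsum r = s) :
    (∑ i, psi θ i r) = term θ r := by
  have hex : ∃ j, (r j).1 ≠ 0 := by
    by_contra h
    push_neg at h
    have h0 : wsum r = 0 := Finset.sum_eq_zero (fun j _ => by rw [h j, Nat.mul_zero])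
    omega
  have hpos : 0 < ∑ j, (r j).1 := by
    obtain ⟨j, hj⟩ := hex
    exact Finset.sum_pos' (fun _ _ => Nat.zero_le _) ⟨j, Finset.mem_univ j, Nat.pos_of_ne_zero hj⟩
  have hT : (∑ j, ((r j).1 : ℝ)) ≠ 0 := by
    rw [← Nat.cast_sum]
    exact_mod_cast hpos.ne'
  simp only [psi]
  rw [← Finset.sum_mul, ← Finset.sum_div, div_mul_eq_mul_div, div_eq_iff hT]
  ring

lemma sum_erase_congr {L B B' : ℕ} (r : Fin L → Fin B) (r' : Fin L → Fin B') (i : Fin L)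
    (h : ∀ j, j ≠ i → (r j).1 = (r' j).1) (f : Fin L → ℕ → ℕ) :
    (∑ j ∈ Finset.univ.erase i, f j (r j).1) = ∑ j ∈ Finset.univ.erase i, f j (r' j).1 :=
  Finset.sum_congr rfl (fun j hj => by rw [h j (Finset.mem_erase.1 hj).1])

lemma prod_erase_congr {L B B' : ℕ} (r : Fin L → Fin B) (r' : Fin L → Fin B') (i : Fin L)
    (h : ∀ j, j ≠ i → (r j).1 = (r' j).1) (f : Fin L → ℕ → ℝ) :
    (∏ j ∈ Finset.univ.erase i, f j (r j).1) = ∏ j ∈ Finset.univ.erase i, f j (r' j).1 :=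
  Finset.prod_congr rfl (fun j hj => by rw [h j (Finset.mem_erase.1 hj).1])

lemma psi_eq (θ : ℝ) {L B : ℕ} (i : Fin L) (r : Fin L → Fin B) (h : (r i).1 ≠ 0) :
    psi θ i r = cc θ (i.1 + 1) *
      term θ (Function.update r i ⟨(r i).1 - 1, lt_of_le_of_lt (Nat.sub_le _ _) (r i).2⟩) := by
  set v : Fin B := ⟨(r i).1 - 1, lt_of_le_of_lt (Nat.sub_le _ _) (r i).2⟩ with hv
  set r' := Function.update r i v with hr'
  have hri' : r' i = v := Function.update_self i v r
  have hoff : ∀ j, j ≠ i → (r' j).1 = (r j).1 := fun j hj => by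
    rw [hr', Function.update_of_ne hj]
  set k := (r i).1 - 1 with hk
  have hvk : (r' i).1 = k := by rw [hri']
  have hik : (r i).1 = k + 1 := by omega
  -- sums
  have hT : (∑ j, (r j).1) = (∑ j, (r' j).1) + 1 := by
    rw [← Finset.add_sum_erase _ (fun j => (r j).1) (Finset.mem_univ i),
        ← Finset.add_sum_erase _ (fun j => (r' j).1) (Finset.mem_univ i),
        sum_erase_congr r' r i (fun j hj => hoff j hj) (fun _ n => n), hvk, hik]
    ring
  -- factorial product
  have hF : (∏ j, (((r j).1).factorial : ℝ)) =
      ((k : ℝ) + 1) * ∏ j, (((r' j).1).factorial : ℝ) := by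
    rw [← Finset.mul_prod_erase _ (fun j => (((r j).1).factorial : ℝ)) (Finset.mem_univ i),
        ← Finset.mul_prod_erase _ (fun j => (((r' j).1).factorial : ℝ)) (Finset.mem_univ i),
        prod_erase_congr r' r i (fun j hj => hoff j hj) (fun _ n => ((n.factorial : ℕ) : ℝ)),
        hvk, hik, Nat.factorial_succ]
    push_cast
    ring
  -- cc product
  have hP : (∏ j, (cc θ (j.1 + 1)) ^ (r j).1) =
      cc θ (i.1 + 1) * ∏ j, (cc θ (j.1 + 1)) ^ (r' j).1 := by
    rw [← Finset.mul_prod_erase _ (fun j => (cc θ (j.1 + 1)) ^ (r j).1) (Finset.mem_univ i),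
        ← Finset.mul_prod_erase _ (fun j => (cc θ (j.1 + 1)) ^ (r' j).1) (Finset.mem_univ i),
        prod_erase_congr r' r i (fun j hj => hoff j hj) (fun j n => (cc θ (j.1 + 1)) ^ n),
        hvk, hik, pow_succ]
    ring
  have hTcast : (∑ j, ((r j).1 : ℝ)) = (∑ j, (r' j).1 : ℕ) + 1 := by
    rw [← Nat.cast_sum, hT]; push_cast; ring
  set T' := ∑ j, (r' j).1 with hT'
  have hfac : ((∑ j, (r j).1).factorial : ℝ) = ((T' : ℝ) + 1) * (T'.factorial : ℝ) := by
    rw [hT, Nat.factorial_succ]; push_cast; ring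
  have hF'pos : (0 : ℝ) < ∏ j, (((r' j).1).factorial : ℝ) :=
    Finset.prod_pos (fun j _ => by exact_mod_cast Nat.factorial_pos _)
  have hT1 : ((T' : ℝ) + 1) ≠ 0 := by positivity
  have hk1 : ((k : ℝ) + 1) ≠ 0 := by positivity
  simp only [psi, term]
  rw [hTcast, hF, hP, hfac, hik]
  push_cast
  field_simp
  ring



lemma wsum_update {L B : ℕ} (r : Fin L → Fin B) (i : Fin L) (v : Fin B) :
    wsum (Function.update r i v) + (i.1 + 1) * (r i).1 = wsum r + (i.1 + 1) * v.1 := by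
  have hoff : ∀ j, j ≠ i → ((Function.update r i v) j).1 = (r j).1 := fun j hj => by
    rw [Function.update_of_ne hj]
  rw [wsum, wsum, ← Finset.add_sum_erase _ (fun j => (j.1 + 1) * ((Function.update r i v) j).1) (Finset.mem_univ i),
      ← Finset.add_sum_erase _ (fun j => (j.1 + 1) * (r j).1) (Finset.mem_univ i),
      sum_erase_congr (Function.update r i v) r i hoff (fun j n => (j.1 + 1) * n),
      Function.update_self]
  ring

lemma inner_sum (θ : ℝ) {L B s : ℕ} (hs : 1 ≤ s) (hB : s < B) (i : Fin L) :
    (∑ r ∈ Finset.univ.filter (fun r : Fin L → Fin B => wsum r = s), psi θ i r) =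
      if i.1 + 1 ≤ s then cc θ (i.1 + 1) * Q θ L B (s - (i.1 + 1)) else 0 := by
  split_ifs with hi
  · have hfil : (∑ r ∈ Finset.univ.filter (fun r : Fin L → Fin B => wsum r = s), psi θ i r) =
        ∑ r ∈ (Finset.univ.filter (fun r : Fin L → Fin B => wsum r = s)).filter
          (fun r => (r i).1 ≠ 0), psi θ i r := by
      refine (Finset.sum_filter_of_ne ?_).symm
      intro r _ hne
      by_contra h0
      exact hne (psi_zero θ i r (by omega))
    rw [hfil, Q, Finset.mul_sum]
    refine Finset.sum_nbij'
      (fun r : Fin L → Fin B =>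
        Function.update r i ⟨(r i).1 - 1, lt_of_le_of_lt (Nat.sub_le _ _) (r i).2⟩)
      (fun r' : Fin L → Fin B =>
        Function.update r' i ⟨min ((r' i).1 + 1) s, lt_of_le_of_lt (min_le_right _ _) hB⟩)
      ?_ ?_ ?_ ?_ ?_
    · intro r hr
      simp only [Finset.mem_filter, Finset.mem_univ, true_and] at hr ⊢
      obtain ⟨hw, hne⟩ := hr
      have hthis := wsum_update r i ⟨(r i).1 - 1, lt_of_le_of_lt (Nat.sub_le _ _) (r i).2⟩
      simp only at hthis
      have hle := wsum_le hw i
      have hx : (i.1 + 1) * (r i).1 = (i.1 + 1) * ((r i).1 - 1) + (i.1 + 1) := by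
        have h1 : (r i).1 - 1 + 1 = (r i).1 := by omega
        calc (i.1 + 1) * (r i).1 = (i.1 + 1) * ((r i).1 - 1 + 1) := by rw [h1]
          _ = (i.1 + 1) * ((r i).1 - 1) + (i.1 + 1) := by ring
      have hy : i.1 + 1 ≤ (i.1 + 1) * (r i).1 :=
        Nat.le_mul_of_pos_right _ (Nat.pos_of_ne_zero hne)
      omega
    · intro r' hr'
      simp only [Finset.mem_filter, Finset.mem_univ, true_and] at hr' ⊢
      have hle := val_le_of_wsum hr' i
      have hmin : min ((r' i).1 + 1) s = (r' i).1 + 1 := by omega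
      have hthis := wsum_update r' i ⟨min ((r' i).1 + 1) s, lt_of_le_of_lt (min_le_right _ _) hB⟩
      simp only [Fin.val_mk] at hthis
      have hx : (i.1 + 1) * (min ((r' i).1 + 1) s) = (i.1 + 1) * (r' i).1 + (i.1 + 1) := by
        rw [hmin]; ring
      constructor
      · omega
      · rw [Function.update_self]
        simp [hmin]
    · intro r hr
      simp only [Finset.mem_filter, Finset.mem_univ, true_and] at hr
      obtain ⟨hw, hne⟩ := hr
      have hle := wsum_le hw i
      have hle2 : (r i).1 ≤ s := val_le_of_wsum hw i
      funext j
      by_cases hj : j = i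
      · subst hj
        ext
        simp only [Function.update_self]
        omega
      · simp only [Function.update_of_ne hj]
    · intro r' hr'
      simp only [Finset.mem_filter, Finset.mem_univ, true_and] at hr'
      have hle := val_le_of_wsum hr' i
      funext j
      by_cases hj : j = i
      · subst hj
        ext
        simp only [Function.update_self]
        omega
      · simp only [Function.update_of_ne hj]
    · intro r hr
      simp only [Finset.mem_filter, Finset.mem_univ, true_and] at hr
      exact psi_eq θ i r hr.2
  · refine Finset.sum_eq_zero (fun r hr => ?_)
    simp only [Finset.mem_filter, Finset.mem_univ, true_and] at hr
    refine psi_zero θ i r ?_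
    have hle := wsum_le hr i
    by_contra hne
    have : i.1 + 1 ≤ (i.1 + 1) * (r i).1 := Nat.le_mul_of_pos_right _ (Nat.pos_of_ne_zero hne)
    omega

lemma Q_rec (θ : ℝ) (L B s : ℕ) (hs : 1 ≤ s) (hL : s ≤ L) (hB : s < B) :
    Q θ L B s = ∑ m ∈ range s, cc θ (m + 1) * Q θ L B (s - (m + 1)) := by
  rw [Q]
  rw [Finset.sum_congr rfl
    (fun r hr => (sum_psi θ hs r (by simpa using (Finset.mem_filter.1 hr).2)).symm)]
  rw [Finset.sum_comm]
  rw [Finset.sum_congr rfl (fun i _ => inner_sum θ hs hB i)]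
  rw [Fin.sum_univ_eq_sum_range
    (fun m => if m + 1 ≤ s then cc θ (m + 1) * Q θ L B (s - (m + 1)) else 0) L]
  rw [← Finset.sum_subset (Finset.range_subset_range.2 hL)
    (fun x _ hx => by
      have : ¬ (x + 1 ≤ s) := by simp only [Finset.mem_range] at hx; omega
      simp [this])]
  exact Finset.sum_congr rfl (fun m hm => by
    have : m + 1 ≤ s := by simp only [Finset.mem_range] at hm; omega
    simp [this])


lemma phiR_zero (θ : ℝ) : phiR θ 0 = 1 := rfl

lemma phiR_eq_Q (θ : ℝ) (ℓ : ℕ) : phiR θ (ℓ + 1) = Q θ (ℓ + 1) (ℓ + 2) (ℓ + 1) := by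
  rw [phiR, Q]
  refine Finset.sum_congr rfl (fun r _ => ?_)
  rw [term]
  congr 1

lemma cc_succ (θ : ℝ) (m : ℕ) :
    cc θ (m + 1) = -(θ ^ ((m + 1) * m / 2)) / (((m + 1).factorial : ℕ) : ℝ) := by
  simp only [cc, Nat.add_sub_cancel]

lemma phiR_rec' (θ : ℝ) (ℓ : ℕ) :
    phiR θ (ℓ + 1) = ∑ m ∈ Finset.range (ℓ + 1), cc θ (m + 1) * phiR θ (ℓ - m) := by
  rw [phiR_eq_Q, Q_rec θ (ℓ + 1) (ℓ + 2) (ℓ + 1) (by omega) le_rfl (by omega)]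
  refine Finset.sum_congr rfl (fun m hm => ?_)
  have hm' : m < ℓ + 1 := Finset.mem_range.1 hm
  congr 1
  have h2 : ℓ + 1 - (m + 1) = ℓ - m := by omega
  rw [h2]
  cases hc : ℓ - m with
  | zero => rw [Q_zero θ _ _ (by omega)]; rfl
  | succ t =>
    have ht : t + 1 ≤ ℓ := by omega
    rw [Q_pad θ t (ℓ + 1) (ℓ + 2) (by omega) (by omega), ← phiR_eq_Q]

lemma phiR_rec (θ : ℝ) (ℓ : ℕ) :
    phiR θ (ℓ + 1) = ∑ m ∈ Finset.range (ℓ + 1),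
      (-(θ ^ ((m + 1) * m / 2)) / (((m + 1).factorial : ℕ) : ℝ)) * phiR θ (ℓ - m) := by
  rw [phiR_rec' θ ℓ]
  exact Finset.sum_congr rfl (fun m _ => by rw [cc_succ])

lemma phiR_one (θ : ℝ) : phiR θ 1 = -1 := by
  rw [phiR_rec θ 0]
  simp [phiR_zero]

noncomputable def HP (a θb : ℝ) (N : ℕ) (u : ℝ) : ℝ :=
  ∑ j ∈ Finset.range (N + 1),
    phiR θb (N - j) * (-a) ^ (N - j) * (θb ^ (j * (j - 1) / 2) * u ^ j / (j.factorial : ℝ))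

lemma HP_zero (a θb u : ℝ) : HP a θb 0 u = 1 := by
  simp [HP, phiR_zero]

lemma HP_one (a θb u : ℝ) : HP a θb 1 u = a + u := by
  simp [HP, Finset.sum_range_succ, phiR_zero, phiR_one]

lemma tri_succ (j : ℕ) : j * (j - 1) / 2 + j = (j + 1) * j / 2 := by
  have h : j * (j - 1) + 2 * j = (j + 1) * j := by
    cases j with
    | zero => simp
    | succ k => simp [Nat.succ_sub_one]; ring
  omega

lemma HP_cont (a θb c : ℝ) (N : ℕ) : Continuous fun v : ℝ => HP a θb N (c * v) := by
  unfold HP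
  apply continuous_finset_sum
  intro j _
  fun_prop

lemma HP_rec (a θb : ℝ) (N : ℕ) (u : ℝ) :
    (∫ v in (-a)..u, HP a θb N (θb * v)) = HP a θb (N + 1) u := by
  have h1 : ∀ v : ℝ, HP a θb N (θb * v) =
      ∑ j ∈ Finset.range (N + 1),
        (phiR θb (N - j) * (-a) ^ (N - j) * (θb ^ (j * (j - 1) / 2) * θb ^ j / (j.factorial : ℝ)))
          * v ^ j := by
    intro v
    rw [HP]
    refine Finset.sum_congr rfl (fun j _ => ?_)
    rw [mul_pow]
    ring
  rw [intervalIntegral.integral_congr (g := fun v => ∑ j ∈ Finset.range (N + 1),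
    (phiR θb (N - j) * (-a) ^ (N - j) * (θb ^ (j * (j - 1) / 2) * θb ^ j / (j.factorial : ℝ)))
      * v ^ j) (fun v _ => h1 v)]
  rw [intervalIntegral.integral_finset_sum (f := fun j (x : ℝ) =>
      (phiR θb (N - j) * (-a) ^ (N - j) * (θb ^ (j * (j - 1) / 2) * θb ^ j / (j.factorial : ℝ))) * x ^ j)
    (fun j _ => ((continuous_const.mul (continuous_pow j)).intervalIntegrable _ _))]
  simp_rw [intervalIntegral.integral_const_mul, integral_pow]
  have expand : ∀ j ∈ Finset.range (N + 1),
      (phiR θb (N - j) * (-a) ^ (N - j) * (θb ^ (j * (j - 1) / 2) * θb ^ j / (j.factorial : ℝ)))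
        * ((u ^ (j + 1) - (-a) ^ (j + 1)) / ((j : ℝ) + 1))
      = phiR θb (N - j) * (-a) ^ (N - j) *
          (θb ^ ((j + 1) * j / 2) * u ^ (j + 1) / ((j + 1).factorial : ℝ))
        - phiR θb (N - j) * (-a) ^ (N - j) *
          (θb ^ ((j + 1) * j / 2) * (-a) ^ (j + 1) / ((j + 1).factorial : ℝ)) := by
    intro j _
    rw [← tri_succ, pow_add, Nat.factorial_succ]
    have hj : ((j.factorial : ℝ)) ≠ 0 := by exact_mod_cast (Nat.factorial_pos j).ne'
    have hj1 : ((j : ℝ) + 1) ≠ 0 := by positivity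
    push_cast
    field_simp
    ring
  rw [Finset.sum_congr rfl expand, Finset.sum_sub_distrib]
  have hfirst : (∑ j ∈ Finset.range (N + 1), phiR θb (N - j) * (-a) ^ (N - j) *
        (θb ^ ((j + 1) * j / 2) * u ^ (j + 1) / ((j + 1).factorial : ℝ)))
      = ∑ j ∈ Finset.range (N + 1), phiR θb (N + 1 - (j + 1)) * (-a) ^ (N + 1 - (j + 1)) *
        (θb ^ ((j + 1) * ((j + 1) - 1) / 2) * u ^ (j + 1) / ((j + 1).factorial : ℝ)) := by
    refine Finset.sum_congr rfl (fun j hj => ?_)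
    have h2 : N + 1 - (j + 1) = N - j := by omega
    rw [h2]
    norm_num
  have hsecond : (∑ j ∈ Finset.range (N + 1), phiR θb (N - j) * (-a) ^ (N - j) *
        (θb ^ ((j + 1) * j / 2) * (-a) ^ (j + 1) / ((j + 1).factorial : ℝ)))
      = -(phiR θb (N + 1 - 0) * (-a) ^ (N + 1 - 0) *
          (θb ^ (0 * (0 - 1) / 2) * u ^ 0 / ((Nat.factorial 0 : ℕ) : ℝ))) := by
    have hterm : ∀ j ∈ Finset.range (N + 1),
        phiR θb (N - j) * (-a) ^ (N - j) *
          (θb ^ ((j + 1) * j / 2) * (-a) ^ (j + 1) / ((j + 1).factorial : ℝ))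
        = -(((-(θb ^ ((j + 1) * j / 2)) / (((j + 1).factorial : ℕ) : ℝ)) * phiR θb (N - j))
            * (-a) ^ (N + 1)) := by
      intro j hj
      have hj' : j < N + 1 := Finset.mem_range.1 hj
      have hpow : (-a) ^ (N - j) * (-a) ^ (j + 1) = (-a) ^ (N + 1) := by
        rw [← pow_add]
        congr 1
        omega
      push_cast
      linear_combination (phiR θb (N - j) * θb ^ ((j + 1) * j / 2) /
        (((j + 1).factorial : ℕ) : ℝ)) * hpow
    rw [Finset.sum_congr rfl hterm, Finset.sum_neg_distrib, ← Finset.sum_mul,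
      ← phiR_rec θb N]
    norm_num
  rw [hfirst, hsecond, HP, Finset.sum_range_succ' _ (N + 1)]
  norm_num



lemma HP_nonneg {a θb : ℝ} (ha : 0 ≤ a) (hb0 : 0 ≤ θb) (hb1 : θb ≤ 1) :
    ∀ (N : ℕ) (u : ℝ), -a ≤ u → u ≤ 1 → 0 ≤ HP a θb N u := by
  intro N
  induction N with
  | zero => intro u _ _; rw [HP_zero]; norm_num
  | succ N ih =>
    intro u h1 h2
    rw [← HP_rec]
    refine intervalIntegral.integral_nonneg h1 (fun v hv => ?_)
    obtain ⟨hv1, hv2⟩ := hv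
    refine ih (θb * v) (by nlinarith) (by nlinarith)

lemma chain_measurable (a θ u : ℝ) (k : ℕ) :
    MeasurableSet {x : Fin (k + 1) → ℝ | (∀ i, x i ∈ Icc (-a) 1) ∧
      (∀ i : Fin k, θ * x i.castSucc ≤ x i.succ) ∧ x (Fin.last k) ≤ u} := by
  simp only [Set.setOf_and, Set.setOf_forall]
  refine (MeasurableSet.iInter fun i => ?_).inter
    ((MeasurableSet.iInter fun i => ?_).inter ?_)
  · exact (measurable_pi_apply i) measurableSet_Icc
  · exact measurableSet_le (measurable_const.mul (measurable_pi_apply _)) (measurable_pi_apply _)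
  · exact measurableSet_le (measurable_pi_apply _) measurable_const

lemma vol_chain (a θ : ℝ) (ha : 0 ≤ a) (hθ : 1 ≤ θ) :
    ∀ (k : ℕ) (u : ℝ), -a ≤ u → u ≤ 1 →
      volume {x : Fin (k + 1) → ℝ | (∀ i, x i ∈ Icc (-a) 1) ∧
          (∀ i : Fin k, θ * x i.castSucc ≤ x i.succ) ∧ x (Fin.last k) ≤ u}
        = ENNReal.ofReal (HP a (1 / θ) (k + 1) u) := by
  have hθ0 : (0 : ℝ) < θ := lt_of_lt_of_le one_pos hθ
  have hinv0 : (0 : ℝ) < 1 / θ := by positivity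
  have hinv1 : 1 / θ ≤ 1 := by
    rw [div_le_one hθ0]; exact hθ
  intro k
  induction k with
  | zero =>
    intro u hu1 hu2
    have hset : {x : Fin 1 → ℝ | (∀ i, x i ∈ Icc (-a) 1) ∧
        (∀ i : Fin 0, θ * x i.castSucc ≤ x i.succ) ∧ x (Fin.last 0) ≤ u}
        = Set.pi Set.univ (fun _ : Fin 1 => Icc (-a) u) := by
      ext x
      simp only [Set.mem_setOf_eq, Set.mem_pi, Set.mem_univ, true_implies, Set.mem_Icc]
      constructor
      · rintro ⟨h1, -, h3⟩ i
        have hi : i = 0 := Subsingleton.elim i 0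
        subst hi
        exact ⟨(h1 0).1, h3⟩
      · intro h
        refine ⟨fun i => ⟨(h i).1, le_trans (h i).2 hu2⟩, fun i => i.elim0, (h _).2⟩
    rw [hset, volume_pi_pi, HP_one]
    simp [Real.volume_Icc]
    congr 1
    ring
  | succ k ih =>
    intro u hu1 hu2
    set S := {x : Fin (k + 2) → ℝ | (∀ i, x i ∈ Icc (-a) 1) ∧
        (∀ i : Fin (k + 1), θ * x i.castSucc ≤ x i.succ) ∧ x (Fin.last (k + 1)) ≤ u} with hS
    have hSm : MeasurableSet S := chain_measurable a θ u (k + 1)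
    have mp := MeasureTheory.volume_preserving_piFinSuccAbove
      (fun _ : Fin (k + 2) => ℝ) (Fin.last (k + 1))
    set e := MeasurableEquiv.piFinSuccAbove (fun _ : Fin (k + 2) => ℝ) (Fin.last (k + 1))
      with he
    have hslice : ∀ v : ℝ, (Prod.mk v ⁻¹' (e.symm ⁻¹' S)) =
        if v ∈ Icc (-a) u then
          {z : Fin (k + 1) → ℝ | (∀ i, z i ∈ Icc (-a) 1) ∧
            (∀ i : Fin k, θ * z i.castSucc ≤ z i.succ) ∧ z (Fin.last k) ≤ (1 / θ) * v}
        else ∅ := by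
      intro v
      have hesymm : ∀ z : Fin (k + 1) → ℝ, e.symm (v, z) = Fin.snoc z v := by
        intro z
        simp [he, MeasurableEquiv.piFinSuccAbove, Fin.insertNthEquiv, Fin.insertNth_last']
      ext z
      simp only [Set.mem_preimage, hesymm, hS, Set.mem_setOf_eq]
      by_cases hv : v ∈ Icc (-a) u
      · simp only [if_pos hv, Set.mem_setOf_eq]
        obtain ⟨hva, hvu⟩ := hv
        constructor
        · rintro ⟨h1, h2, h3⟩
          refine ⟨fun i => by simpa [Fin.snoc_castSucc] using h1 i.castSucc,
            fun i => ?_, ?_⟩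
          · have h4 := h2 i.castSucc
            rw [Fin.succ_castSucc] at h4
            rw [Fin.snoc_castSucc, Fin.snoc_castSucc] at h4; exact h4
          · have h4 := h2 (Fin.last k)
            rw [Fin.succ_last] at h4
            simp only [Fin.snoc_castSucc, Fin.snoc_last] at h4
            rw [one_div, inv_mul_eq_div, le_div_iff₀ hθ0]
            linarith
        · rintro ⟨h1, h2, h3⟩
          refine ⟨fun i => ?_, fun i => ?_, ?_⟩
          · refine Fin.lastCases ?_ (fun j => ?_) i
            · rw [Fin.snoc_last]
              exact ⟨hva, le_trans hvu hu2⟩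
            · rw [Fin.snoc_castSucc]
              exact h1 j
          · refine Fin.lastCases ?_ (fun j => ?_) i
            · rw [Fin.succ_last, Fin.snoc_last, Fin.snoc_castSucc]
              rw [one_div, inv_mul_eq_div, le_div_iff₀ hθ0] at h3
              linarith
            · rw [Fin.succ_castSucc, Fin.snoc_castSucc, Fin.snoc_castSucc]
              exact h2 j
          · rw [Fin.snoc_last]
            exact hvu
      · simp only [if_neg hv, Set.mem_empty_iff_false, iff_false]
        rintro ⟨h1, h2, h3⟩
        apply hv
        have h4 := h1 (Fin.last (k + 1))
        rw [Fin.snoc_last] at h4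
        rw [Fin.snoc_last] at h3
        exact ⟨h4.1, h3⟩
    have hvol : volume S = volume (e.symm ⁻¹' S) :=
      ((mp.symm e).measure_preimage hSm.nullMeasurableSet).symm
    rw [hvol, Measure.volume_eq_prod, Measure.prod_apply (e.symm.measurable hSm)]
    have hpt : ∀ v : ℝ, volume (Prod.mk v ⁻¹' (e.symm ⁻¹' S)) =
        Set.indicator (Icc (-a) u)
          (fun v => ENNReal.ofReal (HP a (1 / θ) (k + 1) ((1 / θ) * v))) v := by
      intro v
      rw [hslice v]
      by_cases hv : v ∈ Icc (-a) u
      · rw [if_pos hv, Set.indicator_of_mem hv]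
        obtain ⟨hv1, hv2⟩ := hv
        refine ih ((1 / θ) * v) ?_ ?_
        · nlinarith [mul_le_mul_of_nonneg_right hinv1 ha]
        · nlinarith
      · rw [if_neg hv, Set.indicator_of_notMem hv, measure_empty]
    rw [lintegral_congr hpt, lintegral_indicator measurableSet_Icc _]
    have hInt : IntegrableOn (fun v => HP a (1 / θ) (k + 1) ((1 / θ) * v)) (Icc (-a) u) :=
      (HP_cont a (1 / θ) (1 / θ) (k + 1)).integrableOn_Icc
    have hAE : 0 ≤ᵐ[volume.restrict (Icc (-a) u)]
        fun v => HP a (1 / θ) (k + 1) ((1 / θ) * v) := by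
      refine (ae_restrict_iff' measurableSet_Icc).2 (ae_of_all _ (fun v hv => ?_))
      obtain ⟨hv1, hv2⟩ := hv
      refine HP_nonneg ha hinv0.le hinv1 (k + 1) ((1 / θ) * v) ?_ ?_
      · nlinarith [mul_le_mul_of_nonneg_right hinv1 ha]
      · nlinarith
    rw [← MeasureTheory.ofReal_integral_eq_lintegral_ofReal hInt hAE]
    congr 1
    rw [MeasureTheory.integral_Icc_eq_integral_Ioc,
      ← intervalIntegral.integral_of_le hu1]
    exact HP_rec a (1 / θ) (k + 1) u

end CRaux


theorem combinatorial_representation_theta_ge_one (a θ : ℝ)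
    (hθ : 1 ≤ θ) (ha : 0 ≤ a) :
    ∀ n : ℕ,
      persprob a θ n =
        (1 / (1 + a)) ^ (n + 1) *
          ∑ k ∈ Finset.range (n + 2),
            phiR (1 / θ) (n + 1 - k) * (-a) ^ (n + 1 - k) *
              ((1 / θ) ^ (k * (k - 1) / 2) / k.factorial) := by
  have ha1 : (0 : ℝ) < 1 + a := by linarith
  have hθ0 : (0 : ℝ) < θ := lt_of_lt_of_le one_pos hθ
  intro n
  cases n with
  | zero =>
    show (1 : ℝ) = _
    rw [Finset.sum_range_succ, Finset.sum_range_one]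
    rw [CRaux.phiR_one, CRaux.phiR_zero]
    norm_num
    field_simp
    ring
  | succ n =>
    show (volume {x : Fin (n + 2) → ℝ |
        (∀ i, x i ∈ Icc (-a) 1) ∧
        ∀ i : Fin (n + 1), θ * x i.castSucc ≤ x i.succ}).toReal / (1 + a) ^ (n + 2) = _
    have hset : {x : Fin (n + 2) → ℝ | (∀ i, x i ∈ Icc (-a) 1) ∧
        ∀ i : Fin (n + 1), θ * x i.castSucc ≤ x i.succ}
        = {x : Fin (n + 2) → ℝ | (∀ i, x i ∈ Icc (-a) 1) ∧
            (∀ i : Fin (n + 1), θ * x i.castSucc ≤ x i.succ) ∧ x (Fin.last (n + 1)) ≤ 1} := by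
      ext x
      simp only [Set.mem_setOf_eq]
      constructor
      · rintro ⟨h1, h2⟩; exact ⟨h1, h2, (h1 _).2⟩
      · rintro ⟨h1, h2, _⟩; exact ⟨h1, h2⟩
    rw [hset, CRaux.vol_chain a θ ha hθ (n + 1) 1 (by linarith) le_rfl]
    have hinv1 : 1 / θ ≤ 1 := by rw [div_le_one hθ0]; exact hθ
    rw [ENNReal.toReal_ofReal
      (CRaux.HP_nonneg ha (by positivity) hinv1 (n + 2) 1 (by linarith) le_rfl)]
    have hterm : CRaux.HP a (1 / θ) (n + 2) 1
        = ∑ k ∈ Finset.range (n + 1 + 2),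
            phiR (1 / θ) (n + 1 + 1 - k) * (-a) ^ (n + 1 + 1 - k) *
              ((1 / θ) ^ (k * (k - 1) / 2) / k.factorial) := by
      rw [CRaux.HP]
      refine Finset.sum_congr rfl (fun j _ => ?_)
      rw [one_pow]
      norm_num
    rw [hterm, show ((1 : ℝ) / (1 + a)) ^ (n + 1 + 1) = ((1 + a) ^ (n + 2))⁻¹ from by
      rw [one_div, inv_pow], inv_mul_eq_div]
end

section
/- Let θ ∈ [-1,0) and a ≥ -1/θ. Then for every n ≥ 1 one has p_n^a(θ) = ((-1)^{n+1}/(1+a)^{n+1}) · ∑_{k=0}^{n+1} (θ^{k(k-3)/2}/k!) · φ_{n+1-k}(θ). -/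
open MeasureTheory Set

noncomputable section
namespace GRC
open Finset PowerSeries

def T (j : ℕ) : ℕ := ∑ i ∈ Finset.range j, i

lemma T_succ (j : ℕ) : T (j + 1) = T j + j := Finset.sum_range_succ _ _

lemma T_mul_two (j : ℕ) : T j * 2 = j * (j - 1) := Finset.sum_range_id_mul_two j

def cc (θ : ℝ) (i : ℕ) : ℝ := θ ^ T i / (Nat.factorial i : ℝ)

lemma cc_zero (θ : ℝ) : cc θ 0 = 1 := by simp [cc, T]

lemma cc_eq (θ : ℝ) (i : ℕ) :
    -(θ ^ ((i + 1) * i / 2)) / (((i + 1).factorial : ℕ) : ℝ) = -cc θ (i + 1) := by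
  have h := T_mul_two (i + 1)
  have : (i + 1) * i / 2 = T (i + 1) := by
    simp only [Nat.add_sub_cancel] at h
    omega
  rw [this, cc]
  ring

def F (θ : ℝ) : PowerSeries ℝ := PowerSeries.mk (cc θ)

lemma constantCoeff_F (θ : ℝ) : PowerSeries.constantCoeff (F θ) = 1 := by
  simpa [F] using cc_zero θ

def psi (θ : ℝ) (ℓ : ℕ) : ℝ := PowerSeries.coeff ℓ (F θ)⁻¹

lemma psi_zero (θ : ℝ) : psi θ 0 = 1 := by
  simp [psi, PowerSeries.coeff_inv, constantCoeff_F]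

lemma psi_rec (θ : ℝ) (ℓ : ℕ) (hl : ℓ ≠ 0) :
    ∑ x ∈ Finset.HasAntidiagonal.antidiagonal ℓ, cc θ x.1 * psi θ x.2 = 0 := by
  have h : PowerSeries.coeff ℓ ((F θ) * (F θ)⁻¹) = 0 := by
    rw [PowerSeries.mul_inv_cancel _ (by rw [constantCoeff_F]; norm_num)]
    simp [PowerSeries.coeff_one, hl]
  rw [PowerSeries.coeff_mul] at h
  simpa [F, psi] using h

/-- the truncated polynomial `∑_{i=1}^{L+1} (-cc θ i) X^i` -/
def Ppoly (θ : ℝ) (L : ℕ) : Polynomial ℝ :=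
  ∑ i : Fin (L + 1), Polynomial.C (-cc θ (i.1 + 1)) * Polynomial.X ^ (i.1 + 1)

lemma coeff_Ppoly_pow (θ : ℝ) (L m : ℕ) :
    (Ppoly θ L ^ m).coeff (L + 1) =
      ∑ k ∈ (Finset.piAntidiag Finset.univ m).filter
          (fun k : Fin (L + 1) → ℕ => ∑ i, (i.1 + 1) * k i = L + 1),
        (Nat.multinomial Finset.univ k : ℝ) * ∏ i, (-cc θ (i.1 + 1)) ^ k i := by
  rw [Ppoly, Finset.sum_pow_eq_sum_piAntidiag, Polynomial.finset_sum_coeff]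
  rw [Finset.sum_filter]
  refine Finset.sum_congr rfl fun k hk => ?_
  have : ∀ i : Fin (L + 1),
      (Polynomial.C (-cc θ (i.1 + 1)) * Polynomial.X ^ (i.1 + 1)) ^ k i =
        Polynomial.C ((-cc θ (i.1 + 1)) ^ k i) * Polynomial.X ^ ((i.1 + 1) * k i) := by
    intro i; rw [mul_pow, ← Polynomial.C_pow, pow_mul]
  simp_rw [this, Finset.prod_mul_distrib, ← map_prod, Finset.prod_pow_eq_pow_sum]
  rw [← Polynomial.C_eq_natCast, ← mul_assoc, ← Polynomial.C_mul, Polynomial.coeff_C_mul,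
    Polynomial.coeff_X_pow]
  by_cases h : ∑ i : Fin (L + 1), (i.1 + 1) * k i = L + 1
  · simp [h]
  · rw [if_neg (fun hs : L + 1 = _ => h hs.symm), if_neg h, mul_zero]


lemma psi_eq_sum_coeff (θ : ℝ) (L : ℕ) :
    psi θ (L + 1) = ∑ m ∈ Finset.range (L + 2), (Ppoly θ L ^ m).coeff (L + 1) := by
  set y : ℝ⟦X⟧ := 1 - F θ with hy
  set G : ℝ⟦X⟧ := ((Ppoly θ L : Polynomial ℝ) : ℝ⟦X⟧) with hG
  have hcy : ∀ mm : ℕ, PowerSeries.coeff mm y = if mm = 0 then 0 else -cc θ mm := by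
    intro mm
    rw [hy, map_sub, PowerSeries.coeff_one]
    by_cases h0 : mm = 0
    · simp [h0, F, cc_zero]
    · simp [h0, F]
  have hcG : ∀ mm : ℕ, mm ≤ L + 1 →
      PowerSeries.coeff mm G = if mm = 0 then 0 else -cc θ mm := by
    intro mm hmm
    rw [hG, Polynomial.coeff_coe, Ppoly, Polynomial.finset_sum_coeff]
    simp_rw [Polynomial.coeff_C_mul, Polynomial.coeff_X_pow]
    by_cases h0 : mm = 0
    · simp [h0]
    · rw [if_neg h0]
      obtain ⟨j, rfl⟩ := Nat.exists_eq_succ_of_ne_zero h0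
      rw [Finset.sum_eq_single_of_mem (⟨j, by omega⟩ : Fin (L + 1)) (Finset.mem_univ _)]
      · simp
      · intro b _ hb
        have hne : ¬(j.succ = b.1 + 1) := fun hbq => hb (Fin.ext (by simp only [Fin.val_mk]; omega))
        rw [if_neg hne, mul_zero]
  have hdvd1 : (X : ℝ⟦X⟧) ^ (L + 2) ∣ y - G := by
    rw [PowerSeries.X_pow_dvd_iff]
    intro mm hmm
    rw [map_sub, hcy mm, hcG mm (by omega), sub_self]
  have hcoeffm : ∀ m : ℕ, PowerSeries.coeff (L + 1) (y ^ m) = (Ppoly θ L ^ m).coeff (L + 1) := by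
    intro m
    have h2 := (PowerSeries.X_pow_dvd_iff.mp
      (dvd_trans hdvd1 (sub_dvd_pow_sub_pow y G m))) (L + 1) (by omega)
    rw [map_sub, sub_eq_zero] at h2
    rw [h2, hG, ← Polynomial.coe_pow, Polynomial.coeff_coe]
  have hX : (X : ℝ⟦X⟧) ∣ y :=
    PowerSeries.X_dvd_iff.mpr (by simp [hy, constantCoeff_F])
  have hFunit : PowerSeries.constantCoeff (F θ) ≠ 0 := by
    rw [constantCoeff_F]; norm_num
  have hgeom : (∑ m ∈ Finset.range (L + 2), y ^ m) * F θ = 1 - y ^ (L + 2) := by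
    have h1 : F θ = 1 - y := by rw [hy]; ring
    rw [h1]
    linear_combination -(geom_sum_mul y (L + 2))
  have hS : (∑ m ∈ Finset.range (L + 2), y ^ m) = (F θ)⁻¹ - y ^ (L + 2) * (F θ)⁻¹ := by
    have h3 := congrArg (fun z => z * (F θ)⁻¹) hgeom
    rw [mul_assoc, PowerSeries.mul_inv_cancel _ hFunit, mul_one] at h3
    rw [h3]; ring
  have hzero : PowerSeries.coeff (L + 1) (y ^ (L + 2) * (F θ)⁻¹) = 0 := by
    have h4 : (X : ℝ⟦X⟧) ^ (L + 2) ∣ y ^ (L + 2) * (F θ)⁻¹ :=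
      Dvd.dvd.mul_right (pow_dvd_pow_of_dvd hX _) _
    exact PowerSeries.X_pow_dvd_iff.mp h4 (L + 1) (by omega)
  have h5 := congrArg (PowerSeries.coeff (L + 1)) hS
  rw [map_sub, hzero, sub_zero, map_sum] at h5
  rw [psi, ← h5]
  exact Finset.sum_congr rfl fun m _ => hcoeffm m


lemma multinomial_cast (n : ℕ) (k : Fin n → ℕ) :
    (Nat.multinomial Finset.univ k : ℝ) =
      ((∑ i, k i).factorial : ℝ) / ∏ i, ((k i).factorial : ℝ) := by
  have h := Nat.multinomial_spec Finset.univ k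
  have hpos : (∏ i, ((k i).factorial : ℝ)) ≠ 0 := by positivity
  rw [eq_div_iff hpos, mul_comm]
  exact_mod_cast congrArg (fun m : ℕ => (m : ℝ)) h

open Fin.NatCast in
lemma phiR_eq_psi (θ : ℝ) (ℓ : ℕ) : phiR θ ℓ = psi θ ℓ := by
  match ℓ with
  | 0 => rw [psi_zero]; rfl
  | L + 1 =>
    rw [psi_eq_sum_coeff]
    simp_rw [coeff_Ppoly_pow]
    rw [← Finset.sum_biUnion (by
      intro m1 h1 m2 h2 hne
      simp only [Finset.disjoint_left]
      intro k hk1 hk2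
      simp only [Finset.mem_coe, Finset.mem_filter, Finset.mem_piAntidiag] at hk1 hk2
      exact hne (by rw [← hk1.1.1, ← hk2.1.1]))]
    rw [phiR]
    refine Finset.sum_nbij' (fun r (i : Fin (L + 1)) => ((r i : ℕ)))
      (fun k (i : Fin (L + 1)) => ((k i : Fin (L + 2)))) ?_ ?_ ?_ ?_ ?_
    · intro r hr
      simp only [Finset.mem_filter, Finset.mem_univ, true_and] at hr
      rw [Finset.mem_biUnion]
      refine ⟨∑ i, (r i : ℕ), ?_, ?_⟩
      · rw [Finset.mem_range]
        have : ∑ i, ((r i : ℕ)) ≤ ∑ i : Fin (L + 1), (i.1 + 1) * (r i : ℕ) :=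
          Finset.sum_le_sum fun i _ => Nat.le_mul_of_pos_left _ (by omega)
        omega
      · rw [Finset.mem_filter]
        exact ⟨by simp, hr⟩
    · intro k hk
      simp only [Finset.mem_biUnion, Finset.mem_filter, Finset.mem_range,
        Finset.mem_piAntidiag] at hk
      obtain ⟨m, hm, ⟨hsum, -⟩, hwt⟩ := hk
      have hbd : ∀ i : Fin (L + 1), k i < L + 2 := by
        intro i
        have h1 : (i.1 + 1) * k i ≤ ∑ i : Fin (L + 1), (i.1 + 1) * k i :=
          Finset.single_le_sum (f := fun i : Fin (L + 1) => (i.1 + 1) * k i)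
            (fun _ _ => Nat.zero_le _) (Finset.mem_univ i)
        have h2 : k i ≤ (i.1 + 1) * k i := Nat.le_mul_of_pos_left _ (by omega)
        omega
      simp only [Finset.mem_filter, Finset.mem_univ, true_and]
      refine Eq.trans (Finset.sum_congr rfl fun i _ => ?_) hwt
      rw [Fin.val_cast_of_lt (hbd i)]
    · intro r _
      funext i
      simp [Fin.cast_val_eq_self]
    · intro k hk
      simp only [Finset.mem_biUnion, Finset.mem_filter, Finset.mem_range,
        Finset.mem_piAntidiag] at hk
      obtain ⟨m, hm, ⟨hsum, -⟩, hwt⟩ := hk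
      have hbd : ∀ i : Fin (L + 1), k i < L + 2 := by
        intro i
        have h1 : (i.1 + 1) * k i ≤ ∑ i : Fin (L + 1), (i.1 + 1) * k i :=
          Finset.single_le_sum (f := fun i : Fin (L + 1) => (i.1 + 1) * k i)
            (fun _ _ => Nat.zero_le _) (Finset.mem_univ i)
        have h2 : k i ≤ (i.1 + 1) * k i := Nat.le_mul_of_pos_left _ (by omega)
        omega
      funext i
      show (((k i : Fin (L + 2)) : ℕ)) = k i
      rw [Fin.val_cast_of_lt (hbd i)]
    · intro r _
      rw [multinomial_cast]
      congr 1
      refine Finset.prod_congr rfl fun i _ => ?_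
      rw [cc_eq]


def ee (θ : ℝ) (j : ℕ) : ℝ := (-1) ^ j * θ ^ T (j + 1) / ((j + 1).factorial : ℝ)

def dd (θ : ℝ) (j : ℕ) : ℝ := (-1) ^ j * θ ^ T j / (j.factorial : ℝ)

def cseq (θ : ℝ) : ℕ → ℝ
  | 0 => 1
  | m + 1 => ∑ j ∈ Finset.range (m + 1), ee θ j * cseq θ (m - j)
decreasing_by exact Nat.lt_succ_of_le (Nat.sub_le _ _)

lemma cseq_succ (θ : ℝ) (m : ℕ) :
    cseq θ (m + 1) = ∑ j ∈ Finset.range (m + 1), ee θ j * cseq θ (m - j) := by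
  rw [cseq]

lemma ee_eq (θ : ℝ) (j : ℕ) : ee θ j = dd θ j * θ ^ j / (j + 1) := by
  rw [ee, dd, T_succ, pow_add, Nat.factorial_succ]
  have h1 : ((j + 1) * j.factorial : ℕ) = ((j : ℝ) + 1) * (j.factorial : ℝ) := by push_cast; ring
  rw [h1]
  have h2 : (j.factorial : ℝ) ≠ 0 := Nat.cast_ne_zero.mpr (Nat.factorial_ne_zero j)
  have h3 : ((j : ℝ) + 1) ≠ 0 := by positivity
  field_simp

lemma dd_succ (θ : ℝ) (j : ℕ) : dd θ (j + 1) = -ee θ j := by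
  rw [ee, dd, pow_succ]
  ring

lemma neg_one_sq_pow (j : ℕ) : ((-1 : ℝ)) ^ j * (-1) ^ j = 1 := by
  rw [← pow_add, ← two_mul, pow_mul]; norm_num

lemma cc_succ_eq (θ : ℝ) (j : ℕ) : cc θ (j + 1) = (-1) ^ j * ee θ j := by
  rw [cc, ee, ← mul_div_assoc, ← mul_assoc, neg_one_sq_pow, one_mul]

lemma cseq_eq_phiR (θ : ℝ) : ∀ m, cseq θ m = (-1) ^ m * phiR θ m := by
  intro m
  induction m using Nat.strong_induction_on with
  | _ m ih =>
    match m with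
    | 0 => simp [cseq]; rfl
    | m + 1 =>
      rw [phiR_eq_psi]
      have hrec := psi_rec θ (m + 1) (by omega)
      rw [Finset.Nat.sum_antidiagonal_eq_sum_range_succ_mk] at hrec
      rw [Finset.sum_range_succ'] at hrec
      simp only [cc_zero, Nat.sub_zero, one_mul] at hrec
      have hpsi : psi θ (m + 1) = -∑ j ∈ Finset.range (m + 1), cc θ (j + 1) * psi θ (m - j) := by
        have hc : ∀ j ∈ Finset.range (m + 1), cc θ (j + 1) * psi θ (m + 1 - (j + 1)) =
            cc θ (j + 1) * psi θ (m - j) := by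
          intro j hj; congr 2; omega
        rw [Finset.sum_congr rfl hc] at hrec
        linarith
      rw [cseq]
      have hterm : ∀ j ∈ Finset.range (m + 1),
          ee θ j * cseq θ (m - j) = (-1) ^ (m + 1) * (-(cc θ (j + 1) * psi θ (m - j))) := by
        intro j hj
        rw [Finset.mem_range] at hj
        rw [ih (m - j) (by omega), cc_succ_eq, phiR_eq_psi]
        have hmj : ((-1 : ℝ)) ^ (m - j) = (-1) ^ m * (-1) ^ j := by
          have h := pow_add (-1 : ℝ) (m - j) j
          rw [show m - j + j = m by omega] at h
          calc ((-1 : ℝ)) ^ (m - j) = (-1) ^ (m - j) * ((-1) ^ j * (-1) ^ j) := by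
                rw [neg_one_sq_pow, mul_one]
            _ = (-1) ^ m * (-1) ^ j := by rw [← mul_assoc, ← h]
        rw [hmj, pow_succ]
        ring
      rw [Finset.sum_congr rfl hterm, ← Finset.mul_sum, Finset.sum_neg_distrib, ← hpsi]

def hpol (θ : ℝ) (n : ℕ) (u : ℝ) : ℝ :=
  ∑ j ∈ Finset.range (n + 1), dd θ j * cseq θ (n - j) * u ^ j

lemma hpol_integral (θ : ℝ) (n : ℕ) (u : ℝ) :
    (∫ t in u..1, hpol θ n (θ * t)) = hpol θ (n + 1) u := by
  have step1 : (∫ t in u..1, hpol θ n (θ * t)) =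
      ∑ j ∈ Finset.range (n + 1), (dd θ j * cseq θ (n - j) * θ ^ j) * ((1 - u ^ (j + 1)) / (j + 1)) := by
    have h1 : (∫ t in u..1, hpol θ n (θ * t)) =
        ∫ t in u..1, ∑ j ∈ Finset.range (n + 1), (dd θ j * cseq θ (n - j) * θ ^ j) * t ^ j := by
      refine intervalIntegral.integral_congr fun t _ => ?_
      rw [hpol]
      exact Finset.sum_congr rfl fun j _ => by rw [mul_pow]; ring
    rw [h1, intervalIntegral.integral_finset_sum (f := fun j t => dd θ j * cseq θ (n - j) * θ ^ j * t ^ j)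
      (fun j _ => (continuous_const.mul (continuous_pow j)).intervalIntegrable u 1)]
    refine Finset.sum_congr rfl fun j _ => ?_
    rw [intervalIntegral.integral_const_mul, integral_pow, one_pow]
  rw [step1, hpol]
  conv_rhs => rw [Finset.sum_range_succ']
  simp only [Nat.succ_sub_succ_eq_sub, Nat.sub_zero, pow_zero, mul_one]
  rw [show dd θ 0 = 1 by rw [dd]; simp [T], one_mul, cseq_succ, ← Finset.sum_add_distrib]
  refine Finset.sum_congr rfl fun j hj => ?_
  rw [dd_succ, ee_eq]
  have h3 : ((j : ℝ) + 1) ≠ 0 := by positivity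
  field_simp
  ring


def Gset (a θ : ℝ) (n : ℕ) (u : ℝ) : Set (Fin (n + 1) → ℝ) :=
  {y | (∀ i, y i ∈ Icc (-a) 1) ∧ u ≤ y 0 ∧ ∀ i : Fin n, θ * y i.castSucc ≤ y i.succ}

lemma measurableSet_Gset (a θ : ℝ) (n : ℕ) (u : ℝ) : MeasurableSet (Gset a θ n u) := by
  have : Gset a θ n u =
      (⋂ i, (fun y : Fin (n + 1) → ℝ => y i) ⁻¹' Icc (-a) 1) ∩
        ({y : Fin (n + 1) → ℝ | u ≤ y 0} ∩
          ⋂ i : Fin n, {y : Fin (n + 1) → ℝ | θ * y i.castSucc ≤ y i.succ}) := by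
    ext y; simp [Gset, Set.mem_iInter]
  rw [this]
  refine MeasurableSet.inter (MeasurableSet.iInter fun i =>
      (measurable_pi_apply i) measurableSet_Icc) (MeasurableSet.inter ?_ ?_)
  · exact measurableSet_le measurable_const (measurable_pi_apply 0)
  · exact MeasurableSet.iInter fun i =>
      measurableSet_le (measurable_const.mul (measurable_pi_apply _)) (measurable_pi_apply _)

lemma Gset_empty (a θ : ℝ) (n : ℕ) {u : ℝ} (h : 1 < u) : Gset a θ n u = ∅ := by
  ext y
  simp only [Gset, Set.mem_setOf_eq, Set.mem_empty_iff_false, iff_false]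
  rintro ⟨h1, h2, -⟩
  have := (h1 0).2
  linarith

lemma Gvol_zero (a θ : ℝ) {u : ℝ} (hu : -a ≤ u) :
    volume (Gset a θ 0 u) = ENNReal.ofReal (1 - u) := by
  have he : Gset a θ 0 u = (MeasurableEquiv.funUnique (Fin 1) ℝ) ⁻¹' (Icc u 1) := by
    ext y
    simp only [Gset, Set.mem_setOf_eq, Set.mem_preimage, MeasurableEquiv.funUnique,
      Equiv.funUnique, MeasurableEquiv.coe_mk, Equiv.coe_fn_mk, Set.mem_Icc]
    constructor
    · rintro ⟨h1, h2, -⟩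
      exact ⟨h2, (h1 0).2⟩
    · rintro ⟨h1, h2⟩
      refine ⟨fun i => ?_, h1, fun i => i.elim0⟩
      have : i = 0 := Fin.ext (by omega)
      rw [this]
      exact ⟨le_trans hu h1, h2⟩
  erw [he, (volume_preserving_funUnique (Fin 1) ℝ).measure_preimage
    measurableSet_Icc.nullMeasurableSet, Real.volume_Icc]

lemma Gvol_succ (a θ : ℝ) (n : ℕ) (u : ℝ) :
    volume (Gset a θ (n + 1) u) =
      ∫⁻ t in Icc (-a) 1 ∩ Ici u, volume (Gset a θ n (θ * t)) := by
  set TT : Set (ℝ × (Fin (n + 1) → ℝ)) :=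
    {p | (p.1 ∈ Icc (-a) 1 ∧ u ≤ p.1) ∧ p.2 ∈ Gset a θ n (θ * p.1)} with hTT
  have hT : MeasurableSet TT := by
    have : TT = ((fun p : ℝ × (Fin (n + 1) → ℝ) => p.1) ⁻¹' (Icc (-a) 1 ∩ Ici u)) ∩
        (((⋂ i, {p : ℝ × (Fin (n + 1) → ℝ) | p.2 i ∈ Icc (-a) 1}) ∩
          {p : ℝ × (Fin (n + 1) → ℝ) | θ * p.1 ≤ p.2 0}) ∩
          ⋂ i : Fin n, {p : ℝ × (Fin (n + 1) → ℝ) | θ * p.2 i.castSucc ≤ p.2 i.succ}) := by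
      ext p
      simp only [hTT, Gset, Set.mem_setOf_eq, Set.mem_inter_iff, Set.mem_preimage,
        Set.mem_iInter, Set.mem_Icc, Set.mem_Ici]
      tauto
    rw [this]
    refine (measurable_fst (measurableSet_Icc.inter measurableSet_Ici)).inter
      (MeasurableSet.inter (MeasurableSet.inter ?_ ?_) ?_)
    · exact MeasurableSet.iInter fun i =>
        (measurable_snd.eval) measurableSet_Icc
    · exact measurableSet_le (measurable_const.mul measurable_fst)
        measurable_snd.eval
    · exact MeasurableSet.iInter fun i =>
        measurableSet_le (measurable_const.mul measurable_snd.eval) measurable_snd.eval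
  have he : Gset a θ (n + 1) u =
      (MeasurableEquiv.piFinSuccAbove (fun _ : Fin (n + 2) => ℝ) 0) ⁻¹' TT := by
    ext x
    simp only [Gset, Set.mem_setOf_eq, Set.mem_preimage,
      MeasurableEquiv.piFinSuccAbove_apply, Fin.insertNthEquiv_symm_apply,
      Fin.removeNth_zero, Fin.tail, Fin.zero_succAbove, hTT]
    constructor
    · rintro ⟨h1, h2, h3⟩
      refine ⟨⟨h1 0, h2⟩, fun j => h1 j.succ, ?_, fun i => ?_⟩
      · have h30 := h3 0
        rwa [Fin.castSucc_zero] at h30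
      · have h3i := h3 i.succ
        rwa [← Fin.succ_castSucc] at h3i
    · rintro ⟨⟨h0, h2⟩, hs, hc0, hcs⟩
      refine ⟨fun i => ?_, h2, fun i => ?_⟩
      · refine Fin.cases h0 (fun j => hs j) i
      · refine Fin.cases ?_ (fun j => ?_) i
        · rwa [Fin.castSucc_zero]
        · have := hcs j
          rwa [Fin.succ_castSucc] at this
  rw [he, (volume_preserving_piFinSuccAbove (fun _ : Fin (n + 2) => ℝ) 0).measure_preimage
    hT.nullMeasurableSet]
  rw [Measure.volume_eq_prod, Measure.prod_apply hT]
  have hind : ∀ t : ℝ, volume (Prod.mk t ⁻¹' TT) =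
      (Icc (-a) 1 ∩ Ici u).indicator (fun t => volume (Gset a θ n (θ * t))) t := by
    intro t
    by_cases ht : t ∈ Icc (-a) 1 ∩ Ici u
    · rw [Set.indicator_of_mem ht]
      congr 1
      ext y
      simp only [Set.mem_preimage, hTT, Set.mem_setOf_eq]
      have h1 := ht.1
      have h2 := ht.2
      simp only [Set.mem_Ici] at h2
      tauto
    · rw [Set.indicator_of_notMem ht]
      have hemp : Prod.mk t ⁻¹' TT = ∅ := by
        ext y
        simp only [Set.mem_preimage, hTT, Set.mem_setOf_eq, Set.mem_empty_iff_false, iff_false]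
        rintro ⟨⟨hi, hu'⟩, -⟩
        exact ht ⟨hi, hu'⟩
      rw [hemp]
      simp
  rw [lintegral_congr hind,
    MeasureTheory.lintegral_indicator (measurableSet_Icc.inter measurableSet_Ici)]


lemma hpol_one (θ : ℝ) (u : ℝ) : hpol θ 1 u = 1 - u := by
  rw [hpol, Finset.sum_range_succ, Finset.sum_range_one]
  have h1 : cseq θ 1 = 1 := by
    rw [cseq_succ, Finset.sum_range_one, ee]
    norm_num [T, cseq]
  have h2 : cseq θ 0 = 1 := by rw [cseq]
  rw [h1, h2, dd, dd]
  norm_num [T]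
  ring

lemma Gvol_eq (a θ : ℝ) (hθ1 : -1 ≤ θ) (hθ0 : θ < 0) (ha : -1 / θ ≤ a) :
    ∀ n : ℕ, ∀ u ∈ Icc θ (1 : ℝ),
      volume (Gset a θ n u) = ENNReal.ofReal (hpol θ (n + 1) u) ∧ 0 ≤ hpol θ (n + 1) u := by
  have hθne : θ ≠ 0 := ne_of_lt hθ0
  have hdiv : θ * (-1 / θ) = -1 := by field_simp
  have hma : -a ≤ θ := by nlinarith [ha, hdiv, sq_nonneg (θ + 1)]
  intro n
  induction n with
  | zero =>
    intro u hu
    have h1 : -a ≤ u := le_trans hma hu.1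
    rw [Gvol_zero a θ h1, hpol_one]
    exact ⟨rfl, by linarith [hu.2]⟩
  | succ n ih =>
    intro u hu
    have hminter : Icc (-a) 1 ∩ Ici u = Icc u 1 := by
      ext t
      simp only [Set.mem_inter_iff, Set.mem_Icc, Set.mem_Ici]
      constructor
      · rintro ⟨⟨-, h2⟩, h3⟩; exact ⟨h3, h2⟩
      · rintro ⟨h1, h2⟩
        exact ⟨⟨le_trans (le_trans hma hu.1) h1, h2⟩, h1⟩
    have hpt : ∀ t ∈ Icc u 1, θ * t ∈ Icc θ (1 : ℝ) := by
      intro t ht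
      constructor
      · nlinarith [ht.2]
      · nlinarith [ht.1, hu.1]
    have hcont : Continuous fun t : ℝ => hpol θ (n + 1) (θ * t) := by
      simp only [hpol]
      exact continuous_finset_sum _ fun j _ =>
        continuous_const.mul ((continuous_const.mul continuous_id).pow j)
    have hnn : 0 ≤ hpol θ (n + 2) u := by
      rw [← hpol_integral]
      exact intervalIntegral.integral_nonneg hu.2 fun t ht => (ih (θ * t) (hpt t ht)).2
    have key : volume (Gset a θ (n + 1) u) =
        ENNReal.ofReal (∫ t in u..1, hpol θ (n + 1) (θ * t)) := by
      rw [Gvol_succ, hminter]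
      rw [setLIntegral_congr_fun measurableSet_Icc
        (fun t ht => (ih (θ * t) (hpt t ht)).1)]
      rw [← MeasureTheory.ofReal_integral_eq_lintegral_ofReal hcont.integrableOn_Icc
        ((ae_restrict_iff' measurableSet_Icc).mpr
          (ae_of_all _ fun t ht => (ih (θ * t) (hpt t ht)).2))]
      rw [intervalIntegral.integral_of_le hu.2, ← integral_Icc_eq_integral_Ioc]
    refine ⟨?_, hnn⟩
    rw [key, hpol_integral]

lemma final_sum (θ : ℝ) (hθne : θ ≠ 0) (n : ℕ) :
    hpol θ (n + 2) (1 / θ) =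
      (-1) ^ (n + 1 + 1) *
        ∑ k ∈ Finset.range (n + 1 + 2),
          θ ^ (((k : ℤ) * ((k : ℤ) - 3)) / 2) / (k.factorial : ℝ) * phiR θ (n + 1 + 1 - k) := by
  rw [hpol, Finset.mul_sum]
  refine Finset.sum_congr rfl fun k hk => ?_
  rw [Finset.mem_range] at hk
  have hexp : ((k : ℤ) * ((k : ℤ) - 3)) / 2 = (T k : ℤ) - k := by
    have h3 : (k : ℤ) * ((k : ℤ) - 3) = 2 * ((T k : ℤ) - k) := by
      cases k with
      | zero => simp [T]
      | succ m =>
        have h2 : ((T (m + 1) : ℕ) : ℤ) * 2 = ((m : ℤ) + 1) * m := by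
          have h0 := T_mul_two (m + 1)
          simp only [Nat.add_sub_cancel] at h0
          exact_mod_cast h0
        push_cast
        linear_combination -h2
    rw [h3, Int.mul_ediv_cancel_left _ (by norm_num)]
  have hzp : θ ^ (((k : ℤ) * ((k : ℤ) - 3)) / 2) = θ ^ T k * (θ ^ k)⁻¹ := by
    rw [hexp, zpow_sub₀ hθne, zpow_natCast, zpow_natCast, div_eq_mul_inv]
  rw [hzp, dd, cseq_eq_phiR]
  have hsign : ((-1 : ℝ)) ^ (n + 2 - k) = (-1) ^ (n + 2) * (-1) ^ k := by
    have h := pow_add (-1 : ℝ) (n + 2 - k) k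
    rw [show n + 2 - k + k = n + 2 by omega] at h
    calc ((-1 : ℝ)) ^ (n + 2 - k) = (-1) ^ (n + 2 - k) * ((-1) ^ k * (-1) ^ k) := by
          rw [neg_one_sq_pow, mul_one]
      _ = (-1) ^ (n + 2) * (-1) ^ k := by rw [← mul_assoc, ← h]
  rw [show n + 1 + 1 - k = n + 2 - k by omega, show n + 1 + 1 = n + 2 by omega, hsign]
  rw [div_pow, one_pow, div_eq_mul_inv, pow_succ (-1 : ℝ) (n + 1)]
  have hone : ((-1 : ℝ)) ^ (k * 2) = 1 := by rw [mul_comm, pow_mul, neg_one_sq, one_pow]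
  ring_nf
  rw [hone]
  ring

end GRC
end

theorem green_region_combinatorial_representation (a θ : ℝ)
    (hθ : θ ∈ Ico (-1 : ℝ) 0) (ha : -1 / θ ≤ a) :
    ∀ n : ℕ, 1 ≤ n →
      persprob a θ n =
        ((-1) ^ (n + 1) / (1 + a) ^ (n + 1)) *
          ∑ k ∈ Finset.range (n + 2),
            θ ^ (((k : ℤ) * ((k : ℤ) - 3)) / 2) / k.factorial * phiR θ (n + 1 - k) := by
  obtain ⟨hθ1, hθ0⟩ := hθ
  have hθne : θ ≠ 0 := ne_of_lt hθ0
  intro n hn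
  obtain ⟨N, rfl⟩ : ∃ N, n = N + 1 := ⟨n - 1, by omega⟩
  have hps : persprob a θ (N + 1) =
      (volume {x : Fin (N + 2) → ℝ | (∀ i, x i ∈ Icc (-a) 1) ∧
        ∀ i : Fin (N + 1), θ * x i.castSucc ≤ x i.succ}).toReal / (1 + a) ^ (N + 2) := rfl
  have hdiv : θ * (1 / θ) = 1 := mul_one_div_cancel hθne
  have h1θm1 : 1 / θ ≤ -1 := by nlinarith [hdiv, hθ1, hθ0]
  have h1θ1 : 1 / θ ≤ 1 := by linarith
  have hma : -a ≤ 1 / θ := by rw [neg_div] at ha; linarith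
  have hset : {x : Fin (N + 2) → ℝ | (∀ i, x i ∈ Icc (-a) 1) ∧
      ∀ i : Fin (N + 1), θ * x i.castSucc ≤ x i.succ} = GRC.Gset a θ (N + 1) (-a) := by
    ext x
    simp only [GRC.Gset, Set.mem_setOf_eq]
    constructor
    · rintro ⟨h1, h2⟩; exact ⟨h1, (h1 0).1, h2⟩
    · rintro ⟨h1, -, h2⟩; exact ⟨h1, h2⟩
  have hIci : Icc (-a) 1 ∩ Ici (-a) = Icc (-a) (1 : ℝ) :=
    Set.inter_eq_left.mpr fun t ht => ht.1
  have hsplit : Icc (-a) (1 : ℝ) = Ico (-a) (1 / θ) ∪ Icc (1 / θ) 1 :=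
    (Set.Ico_union_Icc_eq_Icc hma h1θ1).symm
  have hIco : (∫⁻ t in Ico (-a) (1 / θ), volume (GRC.Gset a θ N (θ * t))) = 0 := by
    have hz : ∀ t ∈ Ico (-a) (1 / θ), volume (GRC.Gset a θ N (θ * t)) = (0 : ENNReal) := by
      intro t ht
      have h := mul_lt_mul_of_neg_left ht.2 hθ0
      rw [hdiv] at h
      rw [GRC.Gset_empty a θ N h, measure_empty]
    rw [setLIntegral_congr_fun measurableSet_Ico hz, lintegral_zero]
  have hG := GRC.Gvol_eq a θ hθ1 hθ0 ha N
  have hpt : ∀ t ∈ Icc (1 / θ) (1 : ℝ), θ * t ∈ Icc θ (1 : ℝ) := by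
    intro t ht
    constructor
    · have h2 := mul_le_mul_of_nonpos_left ht.2 hθ0.le
      rwa [mul_one] at h2
    · have h2 := mul_le_mul_of_nonpos_left ht.1 hθ0.le
      rwa [hdiv] at h2
  have hcont : Continuous fun t : ℝ => GRC.hpol θ (N + 1) (θ * t) := by
    simp only [GRC.hpol]
    exact continuous_finset_sum _ fun j _ =>
      continuous_const.mul ((continuous_const.mul continuous_id).pow j)
  have hIcc2 : (∫⁻ t in Icc (1 / θ) 1, volume (GRC.Gset a θ N (θ * t)))
      = ENNReal.ofReal (GRC.hpol θ (N + 2) (1 / θ)) := by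
    rw [setLIntegral_congr_fun measurableSet_Icc
      (fun t ht => (hG (θ * t) (hpt t ht)).1)]
    rw [← MeasureTheory.ofReal_integral_eq_lintegral_ofReal hcont.integrableOn_Icc
      ((ae_restrict_iff' measurableSet_Icc).mpr
        (ae_of_all _ fun t ht => (hG (θ * t) (hpt t ht)).2))]
    rw [integral_Icc_eq_integral_Ioc, ← intervalIntegral.integral_of_le h1θ1,
      GRC.hpol_integral]
  have hnn2 : 0 ≤ GRC.hpol θ (N + 2) (1 / θ) := by
    rw [← GRC.hpol_integral]
    exact intervalIntegral.integral_nonneg h1θ1 fun t ht => (hG (θ * t) (hpt t ht)).2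
  have hvol : volume (GRC.Gset a θ (N + 1) (-a)) =
      ENNReal.ofReal (GRC.hpol θ (N + 2) (1 / θ)) := by
    rw [GRC.Gvol_succ, hIci, hsplit,
      lintegral_union measurableSet_Icc (by
        rw [Set.disjoint_left]
        rintro t ht1 ht2
        exact absurd ht2.1 (not_le.mpr ht1.2)),
      hIco, hIcc2, zero_add]
  rw [hps, hset, hvol, ENNReal.toReal_ofReal hnn2, GRC.final_sum θ hθne N]
  ring
end

section
/- Let a ∈ (-1,0], set b := -a, and let θ ≥ 1 satisfy θ·b ≤ 1. Then for every n ≥ 0 one has p_n^a(θ) = (1/(1−b)^{n+1}) · (θ^{n(n+1)/2}/(n+1)!) · (max(θ^{-n} − b, 0))^{n+1}. In particular, p_n^a(θ) = 0 whenever θ^n·b ≥ 1, and for b = 0 the formula reads p_n^0(θ) = θ^{-n(n+1)/2}/(n+1)!. -/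
open MeasureTheory Set

namespace LightOrange

/-- The core region: chain-constrained tuples in `[b,1]` with first coordinate `≥ t`. -/
def S (b θ : ℝ) (m : ℕ) (t : ℝ) : Set (Fin (m+1) → ℝ) :=
  {x | (∀ i, x i ∈ Icc b 1) ∧ (∀ i : Fin m, θ * x i.castSucc ≤ x i.succ) ∧ t ≤ x 0}

/-- The claimed explicit formula for the volume of `S`. -/
noncomputable def g (b θ : ℝ) (m : ℕ) (t : ℝ) : ℝ :=
  θ ^ (m*(m+1)/2) / (m+1).factorial * max (θ ^ (-(m:ℤ)) - max t b) 0 ^ (m+1)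

lemma measS (b θ : ℝ) (m : ℕ) (t : ℝ) : MeasurableSet (S b θ m t) := by
  have h1 : MeasurableSet {x : Fin (m+1) → ℝ | ∀ i, x i ∈ Icc b 1} := by
    rw [setOf_forall]
    exact MeasurableSet.iInter fun i => (measurable_pi_apply i) measurableSet_Icc
  have h2 : MeasurableSet {x : Fin (m+1) → ℝ | ∀ i : Fin m, θ * x i.castSucc ≤ x i.succ} := by
    rw [setOf_forall]
    exact MeasurableSet.iInter fun i =>
      measurableSet_le (measurable_const.mul (measurable_pi_apply _)) (measurable_pi_apply _)
  have h3 : MeasurableSet {x : Fin (m+1) → ℝ | t ≤ x 0} :=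
    measurableSet_le measurable_const (measurable_pi_apply 0)
  exact h1.inter (h2.inter h3)

lemma fubini (b θ : ℝ) (m : ℕ) (t : ℝ) :
    volume (S b θ (m+1) t)
      = ∫⁻ s : ℝ, volume {y : Fin (m+1) → ℝ | Fin.cons s y ∈ S b θ (m+1) t} := by
  have hmp := (volume_preserving_piFinSuccAbove (fun _ : Fin (m+2) => ℝ) 0).symm
  have hS := measS b θ (m+1) t
  rw [← hmp.measure_preimage hS.nullMeasurableSet]
  rw [show ((volume : Measure (ℝ × (Fin (m+1) → ℝ)))) = (volume : Measure ℝ).prod volume from rfl]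
  rw [Measure.prod_apply (MeasurableEquiv.measurable _ hS)]
  congr 1
  ext s
  congr 1
  ext y
  simp only [mem_preimage, MeasurableEquiv.piFinSuccAbove_symm_apply, Fin.insertNth_zero',
    mem_setOf_eq, Fin.insertNthEquiv_zero]
  exact Iff.rfl

lemma cons_mem (b θ : ℝ) (m : ℕ) (t : ℝ) (s : ℝ) (y : Fin (m+1) → ℝ) :
    Fin.cons s y ∈ S b θ (m+1) t ↔ (s ∈ Icc (max t b) 1 ∧ y ∈ S b θ m (θ * s)) := by
  simp only [S, mem_setOf_eq, mem_Icc, max_le_iff]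
  constructor
  · rintro ⟨h1, h2, h3⟩
    have hs := h1 0
    rw [Fin.cons_zero] at hs h3
    have hchain0 := h2 0
    rw [Fin.castSucc_zero, Fin.cons_zero, Fin.succ_zero_eq_one] at hchain0
    have h1' : ∀ j : Fin (m+1), y j ∈ Icc b 1 := fun j => by
      have := h1 j.succ; rwa [Fin.cons_succ] at this
    have h2' : ∀ j : Fin m, θ * y j.castSucc ≤ y j.succ := fun j => by
      have := h2 j.succ
      rw [← Fin.succ_castSucc, Fin.cons_succ, Fin.cons_succ] at this
      exact this
    refine ⟨⟨⟨h3, hs.1⟩, hs.2⟩, h1', h2', ?_⟩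
    have : (Fin.cons s y : Fin (m+2) → ℝ) 1 = y 0 := by
      rw [show (1 : Fin (m+2)) = Fin.succ 0 from rfl, Fin.cons_succ]
    rwa [this] at hchain0
  · rintro ⟨⟨⟨ht, hb⟩, h1⟩, hy1, hy2, hy3⟩
    refine ⟨?_, ?_, ?_⟩
    · intro i
      refine Fin.cases ?_ ?_ i
      · rw [Fin.cons_zero]; exact ⟨hb, h1⟩
      · intro j; rw [Fin.cons_succ]; exact hy1 j
    · intro i
      refine Fin.cases ?_ ?_ i
      · rw [Fin.castSucc_zero, Fin.cons_zero, Fin.succ_zero_eq_one,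
          show (1 : Fin (m+2)) = Fin.succ 0 from rfl, Fin.cons_succ]
        exact hy3
      · intro j
        rw [← Fin.succ_castSucc, Fin.cons_succ, Fin.cons_succ]
        exact hy2 j
    · rw [Fin.cons_zero]; exact ht

open intervalIntegral in
lemma integral_piece (θ A c u p : ℝ) (hθ0 : 0 < θ) (k : ℕ)
    (hup : u ≤ p) (hp1 : p ≤ 1) (hAp : θ * p = A) :
    ∫ s in u..(1:ℝ), c * max (A - θ*s) 0 ^ (k+1)
      = c * ((A - θ*u)^(k+2) / (θ*(k+2))) := by
  have hcont : Continuous fun s : ℝ => c * max (A - θ*s) 0 ^ (k+1) := by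
    apply continuous_const.mul
    exact ((continuous_const.sub (continuous_const.mul continuous_id)).max continuous_const).pow _
  have hsplit : ∫ s in u..(1:ℝ), c * max (A - θ*s) 0 ^ (k+1)
      = (∫ s in u..p, c * max (A - θ*s) 0 ^ (k+1))
        + ∫ s in p..(1:ℝ), c * max (A - θ*s) 0 ^ (k+1) :=
    (integral_add_adjacent_intervals (hcont.intervalIntegrable _ _)
      (hcont.intervalIntegrable _ _)).symm
  have hright : (∫ s in p..(1:ℝ), c * max (A - θ*s) 0 ^ (k+1)) = 0 := by
    have h0 : EqOn (fun s => c * max (A - θ*s) 0 ^ (k+1)) (fun _ => (0:ℝ)) (uIcc p 1) := by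
      intro s hs
      rw [uIcc_of_le hp1] at hs
      show c * max (A - θ*s) 0 ^ (k+1) = 0
      have : A - θ*s ≤ 0 := by nlinarith [hs.1]
      rw [max_eq_right this, zero_pow (Nat.succ_ne_zero k), mul_zero]
    rw [integral_congr h0, intervalIntegral.integral_zero]
  have hleft : (∫ s in u..p, c * max (A - θ*s) 0 ^ (k+1))
      = c * ((A - θ*u)^(k+2) / (θ*(k+2))) := by
    have hcongr : ∫ s in u..p, c * max (A - θ*s) 0 ^ (k+1)
        = ∫ s in u..p, c * (A - θ*s) ^ (k+1) := by
      apply integral_congr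
      intro s hs
      rw [uIcc_of_le hup] at hs
      show c * max (A - θ*s) 0 ^ (k+1) = c * (A - θ*s) ^ (k+1)
      have : 0 ≤ A - θ*s := by nlinarith [hs.2]
      rw [max_eq_left this]
    rw [hcongr, intervalIntegral.integral_const_mul]
    have hder : ∀ s : ℝ, HasDerivAt (fun s => -(A - θ*s)^(k+2) / (θ*(k+2)))
        ((A - θ*s)^(k+1)) s := by
      intro s
      have h1 : HasDerivAt (fun s : ℝ => A - θ*s) (-θ) s := by
        exact (((hasDerivAt_id' s).const_mul θ).const_sub A).congr_deriv (by ring)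
      have h2 := ((h1.pow (k+2)).neg).div_const (θ*(k+2))
      refine h2.congr_deriv ?_
      have hne : (θ*(k+2)) ≠ 0 := by positivity
      rw [show k+2-1 = k+1 from rfl]
      field_simp
      push_cast
      ring
    rw [integral_eq_sub_of_hasDerivAt (fun s _ => hder s)
      (((continuous_const.sub (continuous_const.mul continuous_id)).pow _).intervalIntegrable _ _)]
    have hzp : A - θ*p = 0 := by linarith
    rw [hzp]
    rw [zero_pow (by omega : k+2 ≠ 0)]
    ring
  rw [hsplit, hright, hleft, add_zero]

lemma volS (b θ : ℝ) (hb0 : 0 ≤ b) (hθ : 1 ≤ θ) : ∀ (m : ℕ) (t : ℝ),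
    volume (S b θ m t) = ENNReal.ofReal (g b θ m t) := by
  intro m
  induction m with
  | zero =>
    intro t
    have hset : S b θ 0 t = univ.pi (fun _ : Fin 1 => Icc (max t b) 1) := by
      ext x
      simp only [S, mem_setOf_eq, mem_pi, mem_univ, true_implies, mem_Icc, max_le_iff]
      constructor
      · rintro ⟨h1, -, h3⟩
        intro i
        have h0 := h1 0
        have : i = 0 := Subsingleton.elim i 0
        subst this
        exact ⟨⟨h3, h0.1⟩, h0.2⟩
      · intro h
        exact ⟨fun i => ⟨(h i).1.2, (h i).2⟩, fun i => i.elim0, (h 0).1.1⟩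
    rw [hset, volume_pi_pi]
    simp only [Real.volume_Icc, Finset.prod_const, Finset.card_univ, Fintype.card_fin]
    rw [pow_one]
    have : g b θ 0 t = max (1 - max t b) 0 := by simp [g]
    rw [this]
    rcases le_total (1 - max t b) 0 with h | h
    · rw [max_eq_right h, ENNReal.ofReal_zero, ENNReal.ofReal_eq_zero.mpr h]
    · rw [max_eq_left h]
  | succ m ih =>
    intro t
    have hθ0 : (0:ℝ) < θ := lt_of_lt_of_le one_pos hθ
    have hAp : θ * θ ^ (-(m:ℤ) - 1) = θ ^ (-(m:ℤ)) := by
      rw [mul_comm, ← zpow_add_one₀ hθ0.ne']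
      norm_num
    have hp0 : (0:ℝ) < θ ^ (-(m:ℤ) - 1) := zpow_pos hθ0 _
    have hp1 : θ ^ (-(m:ℤ) - 1) ≤ 1 := by
      apply zpow_le_one_of_nonpos₀ hθ
      omega
    have hbu : b ≤ max t b := le_max_right t b
    have hind : ∀ s : ℝ, volume {y : Fin (m+1) → ℝ | Fin.cons s y ∈ S b θ (m+1) t}
        = Set.indicator (Icc (max t b) 1)
            (fun s => ENNReal.ofReal (g b θ m (θ*s))) s := by
      intro s
      by_cases hs : s ∈ Icc (max t b) 1
      · rw [indicator_of_mem hs, ← ih (θ * s)]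
        congr 1
        ext y
        simp only [mem_setOf_eq, cons_mem b θ m t s y, hs, true_and]
      · rw [indicator_of_notMem hs]
        have he : {y : Fin (m+1) → ℝ | Fin.cons s y ∈ S b θ (m+1) t} = ∅ := by
          ext y
          simp only [mem_setOf_eq, cons_mem b θ m t s y, mem_empty_iff_false, iff_false]
          exact fun h => hs h.1
        rw [he, measure_empty]
    rw [fubini, lintegral_congr hind, lintegral_indicator measurableSet_Icc]
    have hcong : ∀ s ∈ Icc (max t b) 1, ENNReal.ofReal (g b θ m (θ*s))
        = ENNReal.ofReal (θ ^ (m*(m+1)/2) / (m+1).factorial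
            * max (θ ^ (-(m:ℤ)) - θ*s) 0 ^ (m+1)) := by
      intro s hs
      have hs0 : 0 ≤ s := hb0.trans (hbu.trans hs.1)
      have hmx : max (θ*s) b = θ*s :=
        max_eq_left ((hbu.trans hs.1).trans (le_mul_of_one_le_left hs0 hθ))
      rw [g, hmx]
    rw [setLIntegral_congr_fun measurableSet_Icc hcong]
    by_cases hpu : θ ^ (-(m:ℤ) - 1) ≤ max t b
    · have hz : ∀ s ∈ Icc (max t b) 1,
          ENNReal.ofReal (θ ^ (m*(m+1)/2) / (m+1).factorial
            * max (θ ^ (-(m:ℤ)) - θ*s) 0 ^ (m+1)) = 0 := by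
        intro s hs
        have h1 : θ ^ (-(m:ℤ)) - θ*s ≤ 0 := by
          have h2 : θ * (θ ^ (-(m:ℤ) - 1)) ≤ θ * s :=
            mul_le_mul_of_nonneg_left (hpu.trans hs.1) hθ0.le
          rw [hAp] at h2
          linarith
        rw [max_eq_right h1, zero_pow (Nat.succ_ne_zero m), mul_zero, ENNReal.ofReal_zero]
      rw [setLIntegral_congr_fun (g := fun _ => 0) measurableSet_Icc hz,
        lintegral_zero]
      have hg0 : g b θ (m+1) t = 0 := by
        rw [g]
        have h1 : θ ^ (-(↑(m+1)):ℤ) = θ ^ (-(m:ℤ) - 1) := by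
          congr 1
          push_cast
          ring
        rw [h1, max_eq_right (by linarith : θ ^ (-(m:ℤ) - 1) - max t b ≤ 0),
          zero_pow (Nat.succ_ne_zero (m+1)), mul_zero]
      rw [hg0, ENNReal.ofReal_zero]
    · have hup : max t b ≤ θ ^ (-(m:ℤ) - 1) := (not_le.mp hpu).le
      have hu1 : max t b ≤ 1 := hup.trans hp1
      have hcont : Continuous fun s : ℝ => θ ^ (m*(m+1)/2) / (m+1).factorial
          * max (θ ^ (-(m:ℤ)) - θ*s) 0 ^ (m+1) := by
        apply continuous_const.mul
        exact ((continuous_const.sub (continuous_const.mul continuous_id)).max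
          continuous_const).pow _
      have hint : Integrable (fun s : ℝ => θ ^ (m*(m+1)/2) / (m+1).factorial
          * max (θ ^ (-(m:ℤ)) - θ*s) 0 ^ (m+1)) (volume.restrict (Icc (max t b) 1)) :=
        hcont.integrableOn_Icc
      have hnn : 0 ≤ᵐ[volume.restrict (Icc (max t b) 1)]
          (fun s : ℝ => θ ^ (m*(m+1)/2) / (m+1).factorial
            * max (θ ^ (-(m:ℤ)) - θ*s) 0 ^ (m+1)) := by
        apply ae_of_all
        intro s
        exact mul_nonneg (div_nonneg (pow_nonneg hθ0.le _) (Nat.cast_nonneg _))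
          (pow_nonneg (le_max_right _ _) _)
      rw [← ofReal_integral_eq_lintegral_ofReal hint hnn]
      congr 1
      rw [MeasureTheory.integral_Icc_eq_integral_Ioc,
        ← intervalIntegral.integral_of_le hu1,
        integral_piece θ (θ ^ (-(m:ℤ))) _ (max t b) (θ ^ (-(m:ℤ) - 1)) hθ0 m hup hp1 hAp]
      rw [g]
      have h1 : θ ^ (-(↑(m+1)):ℤ) = θ ^ (-(m:ℤ) - 1) := by
        congr 1; push_cast; ring
      have h2 : max (θ ^ (-(m:ℤ) - 1) - max t b) 0 = θ ^ (-(m:ℤ) - 1) - max t b :=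
        max_eq_left (by linarith)
      have hE : (m+1)*((m+1)+1)/2 = m*(m+1)/2 + (m+1) := by
        have h3 : (m+1)*((m+1)+1) = m*(m+1) + (m+1)*2 := by ring
        rw [h3, Nat.add_mul_div_right _ _ (by norm_num : (0:ℕ) < 2)]
      have hAu : θ ^ (-(m:ℤ)) - θ*(max t b) = θ*(θ ^ (-(m:ℤ) - 1) - max t b) := by
        rw [mul_sub, hAp]
      rw [h1, h2, hE, hAu, pow_add, mul_pow, Nat.factorial_succ (m+1)]
      have hfne : ((m+1).factorial : ℝ) ≠ 0 := Nat.cast_ne_zero.2 (Nat.factorial_ne_zero _)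
      have hm2 : ((m:ℝ)+1+1) ≠ 0 := by positivity
      push_cast
      field_simp
      ring

end LightOrange

theorem light_orange_explicit_formula (a θ : ℝ) (b : ℝ) (hb : b = -a)
    (ha : a ∈ Ioc (-1 : ℝ) 0) (hθ : 1 ≤ θ) (hθb : θ * b ≤ 1) :
    (∀ n : ℕ,
        persprob a θ n =
          1 / (1 - b) ^ (n + 1) * (θ ^ (n * (n + 1) / 2) / (n + 1).factorial) *
            max (θ ^ (-(n : ℤ)) - b) 0 ^ (n + 1)) ∧
      (∀ n : ℕ, 1 ≤ θ ^ n * b → persprob a θ n = 0) ∧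
      (b = 0 → ∀ n : ℕ,
        persprob a θ n = θ ^ (-((n * (n + 1) / 2 : ℕ) : ℤ)) / (n + 1).factorial) := by
  obtain ⟨ha1, ha0⟩ := ha
  have hb0 : 0 ≤ b := by rw [hb]; linarith
  have hb1 : b < 1 := by rw [hb]; linarith
  have hθ0 : (0:ℝ) < θ := lt_of_lt_of_le one_pos hθ
  have key : ∀ n : ℕ, persprob a θ n =
      1 / (1 - b) ^ (n + 1) * (θ ^ (n * (n + 1) / 2) / (n + 1).factorial) *
        max (θ ^ (-(n : ℤ)) - b) 0 ^ (n + 1) := by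
    intro n
    cases n with
    | zero =>
      show (1:ℝ) = _
      norm_num
      rw [max_eq_left (by linarith : (0:ℝ) ≤ 1 - b)]
      exact (inv_mul_cancel₀ (by linarith : (1:ℝ)-b ≠ 0)).symm
    | succ n =>
      have hT : {x : Fin (n+2) → ℝ | (∀ i, x i ∈ Icc (-a) 1) ∧
          ∀ i : Fin (n+1), θ * x i.castSucc ≤ x i.succ} = LightOrange.S b θ (n+1) b := by
        ext x
        rw [show (-a) = b from hb.symm ▸ rfl]
        simp only [LightOrange.S, mem_setOf_eq]
        constructor
        · rintro ⟨h1, h2⟩; exact ⟨h1, h2, (h1 0).1⟩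
        · rintro ⟨h1, h2, h3⟩; exact ⟨h1, h2⟩
      show (volume _).toReal / (1+a)^(n+2) = _
      rw [hT, LightOrange.volS b θ hb0 hθ (n+1) b]
      have hgnn : 0 ≤ LightOrange.g b θ (n+1) b :=
        mul_nonneg (div_nonneg (pow_nonneg hθ0.le _) (Nat.cast_nonneg _))
          (pow_nonneg (le_max_right _ _) _)
      rw [ENNReal.toReal_ofReal hgnn]
      have h1a : (1+a) = 1-b := by rw [hb]; ring
      rw [h1a, LightOrange.g, max_self]
      ring
  refine ⟨key, ?_, ?_⟩
  · intro n hn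
    rw [key n]
    have hpow : (0:ℝ) < θ^n := pow_pos hθ0 n
    have h' : (θ^n)⁻¹ ≤ b := by
      rw [inv_eq_one_div, div_le_iff₀ hpow]
      nlinarith
    have h'' : θ ^ (-(n:ℤ)) - b ≤ 0 := by
      rw [zpow_neg, zpow_natCast]
      linarith
    rw [max_eq_right h'', zero_pow (Nat.succ_ne_zero n), mul_zero]
  · intro hb' n
    rw [key n, hb']
    have hzp : (0:ℝ) < θ ^ (-(n:ℤ)) := zpow_pos hθ0 _
    simp only [sub_zero]
    rw [max_eq_left hzp.le, one_pow]
    have hE2 : (n:ℤ)*((n:ℤ)+1) = 2*((n*(n+1)/2 : ℕ) : ℤ) := by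
      exact_mod_cast (Nat.mul_div_cancel' (even_iff_two_dvd.mp (Nat.even_mul_succ_self n))).symm
    have hpow : (θ ^ (n*(n+1)/2) : ℝ) * (θ ^ (-(n:ℤ)))^(n+1) = θ ^ (-((n*(n+1)/2 : ℕ) : ℤ)) := by
      rw [← zpow_natCast θ (n*(n+1)/2), ← zpow_natCast (θ ^ (-(n:ℤ))) (n+1), ← zpow_mul,
        ← zpow_add₀ hθ0.ne']
      congr 1
      have hc : ((n+1:ℕ):ℤ) = (n:ℤ)+1 := by push_cast; ring
      rw [hc]
      linear_combination -hE2
    rw [one_div_one, one_mul, div_mul_eq_mul_div, hpow]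
end
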